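/- arXiv:2011.08441 — 8 statements merged into one kernel-verified Lean document; each statement's English description precedes it below -/
import Mathlib

section
/- Let Γ be an admissible subset of C_b(S) and ν a probability measure on S. Then G_Γ(μ‖ν) ≥ 0 for all probability measures μ, and G_Γ(μ‖ν) = 0 if and only if μ = ν. -/
open MeasureTheory BoundedContinuousFunction Real

/-- The weak topology on `C_b(S)` induced by integration against finite measures
(equivalently, finite signed measures). -/
noncomputable def weakTopology (S : Type*) [TopologicalSpace S] [MeasurableSpace S] :
    TopologicalSpace (S →ᵇ ℝ) :=
  ⨅ μ : {μ : Measure S // IsFiniteMeasure μ},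
    TopologicalSpace.induced (fun f : S →ᵇ ℝ => ∫ x, f x ∂μ.1) inferInstance

/-- A set `Γ ⊂ C_b(S)` is admissible if it is convex, closed in the weak topology,
symmetric, contains all constants, and is measure-determining for `P(S)`. -/
def Admissible {S : Type*} [TopologicalSpace S] [MeasurableSpace S]
    (Γ : Set (S →ᵇ ℝ)) : Prop :=
  Convex ℝ Γ ∧ @IsClosed _ (weakTopology S) Γ ∧ (∀ g ∈ Γ, -g ∈ Γ) ∧
    (∀ r : ℝ, BoundedContinuousFunction.const S r ∈ Γ) ∧
    ∀ μ ν : Measure S, IsProbabilityMeasure μ → IsProbabilityMeasure ν → μ ≠ ν →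
      ∃ g ∈ Γ, ∫ x, g x ∂μ ≠ ∫ x, g x ∂ν

/-- The `Γ`-divergence `G_Γ(μ‖ν) = sup_{g ∈ Γ} { ∫ g dμ − log ∫ e^g dν }`. -/
noncomputable def gDiv {S : Type*} [TopologicalSpace S] [MeasurableSpace S]
    (Γ : Set (S →ᵇ ℝ)) (μ ν : Measure S) : EReal :=
  ⨆ g ∈ Γ, (((∫ x, g x ∂μ) - Real.log (∫ x, Real.exp (g x) ∂ν) : ℝ) : EReal)

/-! Testing `g = 0` gives `G_Γ(μ‖ν) ≥ 0`, and Jensen's inequality `∫ g dν ≤ log ∫ e^g dν` gives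
`G_Γ(ν‖ν) ≤ 0`. Conversely, if `μ ≠ ν` then, `Γ` being measure-determining and symmetric, some
`g ∈ Γ` has `∫ g dν < ∫ g dμ`. Since the cumulant generating function of `g` under `ν` has
derivative `∫ g dν` at `0`, the value `t ∫ g dμ - log ∫ e^{t g} dν` is positive for small `t > 0`,
and `t • g ∈ Γ` for `t ∈ (0, 1]` by convexity and `0 ∈ Γ`. -/

open ProbabilityTheory Filter Topology Set

theorem HasDerivAt.eventually_nhdsGT_lt {f : ℝ → ℝ} {f' x : ℝ} (hf : HasDerivAt f f' x)
    (hf' : 0 < f') : ∀ᶠ y in 𝓝[>] x, f x < f y := by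
  have hslope : ∀ᶠ y in 𝓝[>] x, 0 < slope f x y :=
    (hasDerivAt_iff_tendsto_slope.mp hf).mono_left (nhdsWithin_mono _ fun _ hy => ne_of_gt hy)
      |>.eventually (lt_mem_nhds hf')
  filter_upwards [hslope, self_mem_nhdsWithin] with y hy hxy
  rw [slope_def_field, div_pos_iff_of_pos_right (sub_pos.mpr hxy)] at hy
  exact sub_pos.mp hy

namespace BoundedContinuousFunction

variable {S : Type*} [TopologicalSpace S] [MeasurableSpace S] [OpensMeasurableSpace S]

lemma integrable_exp (g : S →ᵇ ℝ) (ν : Measure S) [IsFiniteMeasure ν] :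
    Integrable (fun x => exp (g x)) ν :=
  .of_bound (continuous_exp.comp g.continuous).aestronglyMeasurable (exp ‖g‖) <|
    .of_forall fun x => by
      rw [norm_of_nonneg (exp_pos _).le, exp_le_exp]
      exact (le_abs_self _).trans (g.norm_coe_le_norm x)

lemma integrableExpSet_eq_univ (g : S →ᵇ ℝ) (ν : Measure S) [IsFiniteMeasure ν] :
    integrableExpSet g ν = univ :=
  eq_univ_of_forall fun t => integrable_exp (t • g) ν

lemma integral_le_log_integral_exp (g : S →ᵇ ℝ) (ν : Measure S) [IsProbabilityMeasure ν] :
    ∫ x, g x ∂ν ≤ log (∫ x, exp (g x) ∂ν) := by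
  rw [le_log_iff_exp_le (integral_exp_pos (g.integrable_exp ν))]
  exact convexOn_exp.map_integral_le continuous_exp.continuousOn isClosed_univ
    (.of_forall fun _ => mem_univ _) (g.integrable ν) (g.integrable_exp ν)

lemma hasDerivAt_cgf_zero (g : S →ᵇ ℝ) (ν : Measure S) [IsProbabilityMeasure ν] :
    HasDerivAt (cgf g ν) (∫ x, g x ∂ν) 0 := by
  have h0 : (0 : ℝ) ∈ interior (integrableExpSet g ν) := by
    simp [integrableExpSet_eq_univ]
  simpa [deriv_cgf_zero h0] using (analyticAt_cgf h0).differentiableAt.hasDerivAt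

-- `t ↦ t ∫ g dμ - cgf g ν t` vanishes at `0` with slope `∫ g dμ - ∫ g dν > 0`.
lemma exists_mem_Ioc_cgf_lt (g : S →ᵇ ℝ) {μ ν : Measure S} [IsProbabilityMeasure ν]
    (hlt : ∫ x, g x ∂ν < ∫ x, g x ∂μ) :
    ∃ t ∈ Ioc (0 : ℝ) 1, cgf g ν t < t * ∫ x, g x ∂μ := by
  have hderiv : HasDerivAt (fun t => t * ∫ x, g x ∂μ - cgf g ν t)
      (∫ x, g x ∂μ - ∫ x, g x ∂ν) 0 := by
    simpa using ((hasDerivAt_id 0).mul_const _).fun_sub (g.hasDerivAt_cgf_zero ν)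
  obtain ⟨t, hpos, ht⟩ := ((hderiv.eventually_nhdsGT_lt (sub_pos.mpr hlt)).and
    (Ioc_mem_nhdsGT zero_lt_one)).exists
  exact ⟨t, ht, by simpa using hpos⟩

end BoundedContinuousFunction

section GammaDivergence

variable {S : Type*} [TopologicalSpace S] [MeasurableSpace S] {Γ : Set (S →ᵇ ℝ)}
  {μ ν : Measure S}

lemma le_gDiv {g : S →ᵇ ℝ} (hg : g ∈ Γ) :
    (((∫ x, g x ∂μ) - log (∫ x, exp (g x) ∂ν) : ℝ) : EReal) ≤ gDiv Γ μ ν :=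
  le_iSup₂ (f := fun g (_ : g ∈ Γ) => (((∫ x, g x ∂μ) - log (∫ x, exp (g x) ∂ν) : ℝ) : EReal))
    g hg

lemma gDiv_nonneg [IsProbabilityMeasure ν] (h0 : (0 : S →ᵇ ℝ) ∈ Γ) : 0 ≤ gDiv Γ μ ν := by
  simpa using le_gDiv (μ := μ) (ν := ν) h0

lemma gDiv_self_nonpos [OpensMeasurableSpace S] [IsProbabilityMeasure ν] : gDiv Γ ν ν ≤ 0 :=
  iSup₂_le fun g _ => EReal.coe_nonpos.mpr (sub_nonpos.mpr (g.integral_le_log_integral_exp ν))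

lemma gDiv_pos_of_integral_lt [OpensMeasurableSpace S] [IsProbabilityMeasure ν]
    (hconv : Convex ℝ Γ) (h0 : (0 : S →ᵇ ℝ) ∈ Γ) {g : S →ᵇ ℝ} (hg : g ∈ Γ)
    (hlt : ∫ x, g x ∂ν < ∫ x, g x ∂μ) : 0 < gDiv Γ μ ν := by
  obtain ⟨t, ⟨ht0, ht1⟩, ht⟩ := g.exists_mem_Ioc_cgf_lt hlt
  refine lt_of_lt_of_le ?_ (le_gDiv (hconv.smul_mem_of_zero_mem h0 hg ⟨ht0.le, ht1⟩))
  have hval : ∫ x, (t • g) x ∂μ - log (∫ x, exp ((t • g) x) ∂ν)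
      = t * ∫ x, g x ∂μ - cgf g ν t := by
    simp [cgf, mgf, integral_const_mul]
  exact EReal.coe_pos.mpr (hval ▸ sub_pos.mpr ht)

lemma Admissible.zero_mem (hΓ : Admissible Γ) : (0 : S →ᵇ ℝ) ∈ Γ :=
  hΓ.2.2.2.1 0

lemma Admissible.exists_integral_lt (hΓ : Admissible Γ) [IsProbabilityMeasure μ]
    [IsProbabilityMeasure ν] (hne : μ ≠ ν) : ∃ g ∈ Γ, ∫ x, g x ∂ν < ∫ x, g x ∂μ := by
  obtain ⟨g, hg, hgne⟩ := hΓ.2.2.2.2 μ ν inferInstance inferInstance hne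
  rcases hgne.lt_or_gt with hlt | hlt
  · exact ⟨-g, hΓ.2.2.1 g hg, by simpa [integral_neg] using hlt⟩
  · exact ⟨g, hg, hlt⟩

end GammaDivergence

theorem gDiv_nonneg_and_eq_zero_iff_general
    {S : Type*} [TopologicalSpace S] [MeasurableSpace S] [BorelSpace S]
    (Γ : Set (S →ᵇ ℝ)) (hΓ : Admissible Γ)
    (μ ν : Measure S) [IsProbabilityMeasure μ] [IsProbabilityMeasure ν] :
    0 ≤ gDiv Γ μ ν ∧ (gDiv Γ μ ν = 0 ↔ μ = ν) := by
  refine ⟨gDiv_nonneg hΓ.zero_mem, fun h => ?_, ?_⟩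
  · by_contra hne
    obtain ⟨g, hg, hlt⟩ := hΓ.exists_integral_lt hne
    exact (gDiv_pos_of_integral_lt hΓ.1 hΓ.zero_mem hg hlt).ne' h
  · rintro rfl
    exact le_antisymm gDiv_self_nonpos (gDiv_nonneg hΓ.zero_mem)

/-- For admissible `Γ`: `G_Γ(μ‖ν) ≥ 0`, with equality iff `μ = ν`. -/
theorem gDiv_nonneg_and_eq_zero_iff
    {S : Type*} [TopologicalSpace S] [PolishSpace S] [MeasurableSpace S] [BorelSpace S]
    (Γ : Set (S →ᵇ ℝ)) (hΓ : Admissible Γ)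
    (μ ν : Measure S) [IsProbabilityMeasure μ] [IsProbabilityMeasure ν] :
    0 ≤ gDiv Γ μ ν ∧ (gDiv Γ μ ν = 0 ↔ μ = ν) :=
  gDiv_nonneg_and_eq_zero_iff_general Γ hΓ μ ν
end

section
/- Let Γ be admissible, ν ∈ P(S), and μ ∈ P(S) with μ ≪ ν. If μ itself belongs to the class A(S) (i.e., dμ/dν = e^g on supp(ν) for some g ∈ Γ), then G_Γ(μ‖ν) = R(μ‖ν). -/
open MeasureTheory BoundedContinuousFunction Real

/-- The topological support of a measure. -/
def measSupport {S : Type*} [TopologicalSpace S] [MeasurableSpace S] (ν : Measure S) : Set S :=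
  {x : S | ∀ U : Set S, IsOpen U → x ∈ U → ν U ≠ 0}

/-- Relative entropy via its Donsker–Varadhan representation over bounded measurable functions. -/
noncomputable def klSup {S : Type*} [MeasurableSpace S] (μ ν : Measure S) : EReal :=
  ⨆ (g : S → ℝ) (_ : Measurable g ∧ ∃ C, ∀ x, |g x| ≤ C),
    (((∫ x, g x ∂μ) - Real.log (∫ x, Real.exp (g x) ∂ν) : ℝ) : EReal)

open ProbabilityTheory InformationTheory

lemma measSupport_eq_support {S : Type*} [TopologicalSpace S] [MeasurableSpace S]
    (ν : Measure S) : measSupport ν = ν.support := by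
  simp only [Measure.support_eq_forall_isOpen, measSupport, pos_iff_ne_zero]
  grind

section DonskerVaradhan

variable {α : Type*} [MeasurableSpace α] {μ ν : Measure α}

/-- The gap is `KL(μ ‖ γ) ≥ 0` for the tilted measure `dγ = e^f dν / ∫ e^f dν`. -/
lemma sub_log_integral_exp_le_integral_llr [IsProbabilityMeasure μ] [IsProbabilityMeasure ν]
    (hμν : μ ≪ ν) (h_int : Integrable (llr μ ν) μ) {f : α → ℝ} (hfμ : Integrable f μ)
    (hfν : Integrable (fun x ↦ exp (f x)) ν) :
    ∫ x, f x ∂μ - log (∫ x, exp (f x) ∂ν) ≤ ∫ x, llr μ ν x ∂μ := by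
  have : IsProbabilityMeasure (ν.tilted f) := isProbabilityMeasure_tilted hfν
  have h_gibbs := integral_llr_add_sub_measure_univ_nonneg
    (hμν.trans (absolutelyContinuous_tilted hfν)) (integrable_llr_tilted_right hμν hfμ h_int hfν)
  rw [integral_llr_tilted_right hμν hfμ hfν h_int] at h_gibbs
  simp only [probReal_univ] at h_gibbs
  linarith

lemma klSup_le_integral_llr [IsProbabilityMeasure μ] [IsProbabilityMeasure ν]
    (hμν : μ ≪ ν) (h_int : Integrable (llr μ ν) μ) :
    klSup μ ν ≤ ((∫ x, llr μ ν x ∂μ : ℝ) : EReal) := by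
  refine iSup₂_le fun f ⟨hf, C, hC⟩ ↦ EReal.coe_le_coe_iff.2 ?_
  refine sub_log_integral_exp_le_integral_llr hμν h_int
    (.of_bound hf.aestronglyMeasurable C (.of_forall hC))
    (.of_bound hf.exp.aestronglyMeasurable (exp C) (.of_forall fun x ↦ ?_))
  rw [norm_of_nonneg (exp_pos _).le, exp_le_exp]
  exact (le_abs_self _).trans (hC x)

end DonskerVaradhan

lemma gDiv_le_klSup {S : Type*} [TopologicalSpace S] [MeasurableSpace S] [OpensMeasurableSpace S]
    (Γ : Set (S →ᵇ ℝ)) (μ ν : Measure S) : gDiv Γ μ ν ≤ klSup μ ν :=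
  iSup₂_le fun g _ ↦ le_iSup₂_of_le (fun x ↦ g x)
    ⟨g.continuous.measurable, ‖g‖, fun x ↦ by simpa using g.norm_coe_le_norm x⟩ le_rfl

theorem gDiv_eq_klSup_of_mem_classA_general
    {S : Type*} [TopologicalSpace S] [PolishSpace S] [MeasurableSpace S] [BorelSpace S]
    (Γ : Set (S →ᵇ ℝ))
    (μ ν : Measure S) [IsProbabilityMeasure μ] [IsProbabilityMeasure ν] (hac : μ ≪ ν)
    (hA : ∃ g ∈ Γ, ∀ x ∈ measSupport ν, μ.rnDeriv ν x = ENNReal.ofReal (Real.exp (g x))) :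
    gDiv Γ μ ν = klSup μ ν := by
  obtain ⟨g, hgΓ, hg⟩ := hA
  have h_density : ∀ᵐ x ∂ν, (μ.rnDeriv ν x).toReal = exp (g x) := by
    filter_upwards [measSupport_eq_support ν ▸ Measure.support_mem_ae] with x hx
    rw [hg x hx, ENNReal.toReal_ofReal (exp_pos _).le]
  have h_llr : llr μ ν =ᵐ[μ] fun x ↦ g x :=
    hac.ae_le (h_density.mono fun x hx ↦ by simp only [llr_def, hx, log_exp])
  have h_normalized : ∫ x, exp (g x) ∂ν = 1 := by
    rw [← integral_congr_ae h_density, Measure.integral_toReal_rnDeriv hac, probReal_univ]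
  refine le_antisymm (gDiv_le_klSup Γ μ ν) ?_
  calc klSup μ ν ≤ ((∫ x, llr μ ν x ∂μ : ℝ) : EReal) :=
        klSup_le_integral_llr hac ((integrable_congr h_llr).2 (g.integrable μ))
    _ = (((∫ x, g x ∂μ) - log (∫ x, exp (g x) ∂ν) : ℝ) : EReal) := by
        rw [integral_congr_ae h_llr, h_normalized, log_one, sub_zero]
    _ ≤ gDiv Γ μ ν := le_iSup₂_of_le g hgΓ le_rfl

/-- If `μ ≪ ν` and `dμ/dν = e^g` on `supp(ν)` for some `g ∈ Γ`, then `G_Γ(μ‖ν) = R(μ‖ν)`. -/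
theorem gDiv_eq_klSup_of_mem_classA
    {S : Type*} [TopologicalSpace S] [PolishSpace S] [MeasurableSpace S] [BorelSpace S]
    (Γ : Set (S →ᵇ ℝ)) (hΓ : Admissible Γ)
    (μ ν : Measure S) [IsProbabilityMeasure μ] [IsProbabilityMeasure ν] (hac : μ ≪ ν)
    (hA : ∃ g ∈ Γ, ∀ x ∈ measSupport ν, μ.rnDeriv ν x = ENNReal.ofReal (Real.exp (g x))) :
    gDiv Γ μ ν = klSup μ ν :=
  gDiv_eq_klSup_of_mem_classA_general Γ μ ν hac hA
end

section
/- Let c be a continuous metric on a Polish space S (continuous with respect to the underlying metric of S), and let Q = { x ↦ min(c(x, x₀), n) : x₀ ∈ S, n ∈ ℕ }. Then Q ⊂ C_b(S) and c(x,y) = sup_{u ∈ Q} (u(x) − u(y)) for all x, y ∈ S. -/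
/-! By the reverse triangle inequality every truncation `min (c · x₀) n` is 1-Lipschitz for `c`,
so `u x - u y ≤ c x y` for `u ∈ Q`; the bound is attained at `x₀ = y` once `n ≥ c x y`. -/

section TruncatedDistance

variable {S : Type*} {c : S → S → ℝ}

theorem nonneg_of_symm_of_triangle (hself : ∀ x, c x x = 0) (hsymm : ∀ x y, c x y = c y x)
    (htri : ∀ x y z, c x z ≤ c x y + c y z) (x y : S) : 0 ≤ c x y := by
  linarith [htri x y x, hself x, hsymm x y]

theorem abs_sub_le_of_symm_of_triangle (hsymm : ∀ x y, c x y = c y x)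
    (htri : ∀ x y z, c x z ≤ c x y + c y z) (x y z : S) : |c x z - c y z| ≤ c x y :=
  abs_sub_le_iff.2 ⟨by linarith [htri x y z], by linarith [htri y x z, hsymm x y]⟩

theorem min_sub_min_le_of_symm_of_triangle (hsymm : ∀ x y, c x y = c y x)
    (htri : ∀ x y z, c x z ≤ c x y + c y z) (x y z : S) (n : ℝ) :
    min (c x z) n - min (c y z) n ≤ c x y := by
  have hlip := abs_sub_le_of_symm_of_triangle hsymm htri x y z
  calc min (c x z) n - min (c y z) n ≤ |min (c x z) n - min (c y z) n| := le_abs_self _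
    _ ≤ max |c x z - c y z| |n - n| := abs_min_sub_min_le_max _ _ _ _
    _ ≤ c x y := by simpa using hlip

theorem min_sub_min_self_eq (hself : ∀ x, c x x = 0) {x y : S} {n : ℕ} (hn : c x y ≤ n) :
    min (c x y) (n : ℝ) - min (c y y) n = c x y := by
  rw [hself, min_eq_left hn, min_eq_left n.cast_nonneg, sub_zero]

end TruncatedDistance

theorem continuous_metric_sup_rep_general
    {S : Type*} [MetricSpace S]
    (c : S → S → ℝ)
    (hsymm : ∀ x y, c x y = c y x)
    (hzero : ∀ x y, c x y = 0 ↔ x = y)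
    (htri : ∀ x y z, c x z ≤ c x y + c y z)
    (hcont : Continuous fun p : S × S => c p.1 p.2) :
    (∀ f ∈ {f : S → ℝ | ∃ (x₀ : S) (n : ℕ), f = fun x => min (c x x₀) (n : ℝ)},
        Continuous f ∧ ∃ C : ℝ, ∀ x, |f x| ≤ C) ∧
    ∀ x y : S, IsLUB {r : ℝ | ∃ f ∈ {f : S → ℝ | ∃ (x₀ : S) (n : ℕ),
        f = fun x => min (c x x₀) (n : ℝ)}, r = f x - f y} (c x y) := by
  have hself : ∀ x, c x x = 0 := fun x => (hzero x x).2 rfl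
  have hnonneg := nonneg_of_symm_of_triangle hself hsymm htri
  refine ⟨?_, fun x y => IsGreatest.isLUB ⟨?_, ?_⟩⟩
  · rintro f ⟨x₀, n, rfl⟩
    refine ⟨(hcont.comp (continuous_id.prodMk continuous_const)).min continuous_const, n,
      fun x => abs_le.2 ⟨?_, min_le_right _ _⟩⟩
    exact (neg_nonpos.2 n.cast_nonneg).trans (le_min (hnonneg x x₀) n.cast_nonneg)
  · exact ⟨_, ⟨y, ⌈c x y⌉₊, rfl⟩, (min_sub_min_self_eq hself (Nat.le_ceil _)).symm⟩
  · rintro r ⟨f, ⟨x₀, n, rfl⟩, rfl⟩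
    exact min_sub_min_le_of_symm_of_triangle hsymm htri x y x₀ n

/-- If `c` is a continuous metric on a Polish space `S`, then the family
`Q = { x ↦ min(c(x,x₀), n) }` consists of bounded continuous functions and
`c(x,y) = sup_{u ∈ Q} (u(x) − u(y))`. -/
theorem continuous_metric_sup_rep
    {S : Type*} [MetricSpace S] [PolishSpace S]
    (c : S → S → ℝ)
    (hsymm : ∀ x y, c x y = c y x)
    (hzero : ∀ x y, c x y = 0 ↔ x = y)
    (htri : ∀ x y z, c x z ≤ c x y + c y z)
    (hcont : Continuous fun p : S × S => c p.1 p.2) :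
    (∀ f ∈ {f : S → ℝ | ∃ (x₀ : S) (n : ℕ), f = fun x => min (c x x₀) (n : ℝ)},
        Continuous f ∧ ∃ C : ℝ, ∀ x, |f x| ≤ C) ∧
    ∀ x y : S, IsLUB {r : ℝ | ∃ f ∈ {f : S → ℝ | ∃ (x₀ : S) (n : ℕ),
        f = fun x => min (c x x₀) (n : ℝ)}, r = f x - f y} (c x y) :=
  continuous_metric_sup_rep_general c hsymm hzero htri hcont
end

section
/- Let Γ₀ ⊂ C_b(S) be admissible. Then for all probability measures μ, ν on S, lim_{δ→0⁺} (1/δ) G_{δΓ₀}(μ‖ν) = W_{Γ₀}(μ−ν). -/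
open MeasureTheory BoundedContinuousFunction Real Filter

/-- `W_Γ(μ − γ) = sup_{g ∈ Γ} ∫ g d(μ−γ)`. -/
noncomputable def wGamma {S : Type*} [TopologicalSpace S] [MeasurableSpace S]
    (Γ : Set (S →ᵇ ℝ)) (μ γ : Measure S) : EReal :=
  ⨆ g ∈ Γ, (((∫ x, g x ∂μ) - ∫ x, g x ∂γ : ℝ) : EReal)

/-- The scaled set `bΓ = {b·f : f ∈ Γ}`. -/
def scaleSet {S : Type*} [TopologicalSpace S] (b : ℝ) (Γ : Set (S →ᵇ ℝ)) :
    Set (S →ᵇ ℝ) := (fun g => b • g) '' Γ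

/-! Write `Λ_g(δ) = log ∫ e^{δ g} dν` for the cumulant generating function of `g` under `ν`.
Then `(1/δ) G_{δΓ₀}(μ‖ν) = sup_{g ∈ Γ₀} (∫ g dμ - Λ_g(δ)/δ)`. By Jensen, `Λ_g(δ)/δ ≥ ∫ g dν`, so
every term lies below the corresponding term `∫ g dμ - ∫ g dν` of `W_{Γ₀}(μ - ν)`; and since
`Λ_g(0) = 0` and `Λ_g'(0) = ∫ g dν`, each term converges to it. A supremum of functions that
converge to their limits from below converges to the supremum of the limits. -/

open ProbabilityTheory Set Topology

lemma tendsto_biSup_of_tendsto_of_le {α β ι : Type*} [CompleteLinearOrder α]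
    [TopologicalSpace α] [OrderTopology α] {l : Filter β} {s : Set ι} {F : ι → β → α}
    {a : ι → α} (hF : ∀ i ∈ s, Tendsto (F i) l (𝓝 (a i)))
    (hle : ∀ᶠ x in l, ∀ i ∈ s, F i x ≤ a i) :
    Tendsto (fun x => ⨆ i ∈ s, F i x) l (𝓝 (⨆ i ∈ s, a i)) := by
  refine tendsto_order.2 ⟨fun b hb => ?_, fun b hb => ?_⟩
  · obtain ⟨i, hi, hbi⟩ := lt_biSup_iff.1 hb
    filter_upwards [(hF i hi).eventually (lt_mem_nhds hbi)] with x hx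
    exact hx.trans_le (le_biSup (fun i => F i x) hi)
  · filter_upwards [hle] with x hx
    exact (iSup₂_mono hx).trans_lt hb

lemma EReal.coe_mul_iSup_of_pos {ι : Sort*} {c : ℝ} (hc : 0 < c) (f : ι → EReal) :
    (c : EReal) * ⨆ i, f i = ⨆ i, (c : EReal) * f i := by
  have hc' : (0 : EReal) < c := EReal.coe_pos.2 hc
  refine Monotone.map_iSup_of_continuousAt (f := fun x => (c : EReal) * x) ?_
    (fun _ _ h => mul_le_mul_of_nonneg_left h hc'.le) (EReal.coe_mul_bot_of_pos hc)
  exact (EReal.continuousAt_mul (Or.inl hc'.ne') (Or.inl hc'.ne') (Or.inl (EReal.coe_ne_bot c))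
    (Or.inl (EReal.coe_ne_top c))).comp (Continuous.prodMk_right (c : EReal)).continuousAt

namespace ProbabilityTheory

variable {Ω : Type*} {m : MeasurableSpace Ω} {X : Ω → ℝ} {μ : Measure Ω} {t : ℝ}

lemma integrableExpSet_eq_univ_of_abs_le [IsFiniteMeasure μ] (hX : AEStronglyMeasurable X μ)
    {C : ℝ} (hC : ∀ᵐ ω ∂μ, |X ω| ≤ C) : integrableExpSet X μ = univ := by
  refine eq_univ_of_forall fun t => Integrable.of_bound (Real.continuous_exp.comp_aestronglyMeasurable
    (hX.const_mul t)) (Real.exp (|t| * C)) ?_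
  filter_upwards [hC] with ω hω
  rw [Real.norm_eq_abs, Real.abs_exp, Real.exp_le_exp]
  calc t * X ω ≤ |t * X ω| := le_abs_self _
    _ = |t| * |X ω| := abs_mul t (X ω)
    _ ≤ |t| * C := mul_le_mul_of_nonneg_left hω (abs_nonneg t)

lemma mul_integral_le_cgf [IsProbabilityMeasure μ] (hX : Integrable X μ)
    (ht : Integrable (fun ω => exp (t * X ω)) μ) : t * μ[X] ≤ cgf X μ t := by
  rw [cgf, Real.le_log_iff_exp_le (mgf_pos ht), mgf, ← integral_const_mul]
  exact convexOn_exp.map_integral_le continuousOn_exp isClosed_univ (ae_of_all _ fun _ => trivial)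
    (hX.const_mul t) ht

lemma integral_le_inv_mul_cgf [IsProbabilityMeasure μ] (hX : Integrable X μ)
    (ht : Integrable (fun ω => exp (t * X ω)) μ) (ht0 : 0 < t) : μ[X] ≤ t⁻¹ * cgf X μ t := by
  rw [le_inv_mul_iff₀ ht0]
  exact mul_integral_le_cgf hX ht

lemma tendsto_inv_mul_cgf_nhdsGT_zero [IsProbabilityMeasure μ]
    (h : 0 ∈ interior (integrableExpSet X μ)) :
    Tendsto (fun t => t⁻¹ * cgf X μ t) (𝓝[>] 0) (𝓝 μ[X]) := by
  have hderiv : HasDerivAt (cgf X μ) μ[X] 0 := by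
    simpa [deriv_cgf_zero h] using (analyticAt_cgf h).differentiableAt.hasDerivAt
  simpa [cgf_zero] using hderiv.tendsto_slope_zero_right

end ProbabilityTheory

lemma BoundedContinuousFunction.integrableExpSet_eq_univ_s13 {S : Type*} [TopologicalSpace S]
    [MeasurableSpace S] [OpensMeasurableSpace S] (g : S →ᵇ ℝ) (ν : Measure S) [IsFiniteMeasure ν] :
    integrableExpSet g ν = univ :=
  integrableExpSet_eq_univ_of_abs_le g.continuous.aestronglyMeasurable
    (ae_of_all _ g.norm_coe_le_norm)

lemma gDiv_scaleSet {S : Type*} [TopologicalSpace S] [MeasurableSpace S] (δ : ℝ)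
    (Γ : Set (S →ᵇ ℝ)) (μ ν : Measure S) :
    gDiv (scaleSet δ Γ) μ ν = ⨆ g ∈ Γ, ((δ * ∫ x, g x ∂μ - cgf g ν δ : ℝ) : EReal) := by
  simp only [gDiv, scaleSet, iSup_image, coe_smul, smul_eq_mul, integral_const_mul]
  rfl

lemma inv_mul_gDiv_scaleSet {S : Type*} [TopologicalSpace S] [MeasurableSpace S] {δ : ℝ}
    (hδ : 0 < δ) (Γ : Set (S →ᵇ ℝ)) (μ ν : Measure S) :
    ((δ⁻¹ : ℝ) : EReal) * gDiv (scaleSet δ Γ) μ ν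
      = ⨆ g ∈ Γ, ((∫ x, g x ∂μ - δ⁻¹ * cgf g ν δ : ℝ) : EReal) := by
  simp only [gDiv_scaleSet, EReal.coe_mul_iSup_of_pos (inv_pos.2 hδ), ← EReal.coe_mul]
  congr! 3
  field_simp

theorem gDiv_scale_small_tendsto_wGamma_general
    {S : Type*} [TopologicalSpace S] [MeasurableSpace S] [BorelSpace S]
    (Γ₀ : Set (S →ᵇ ℝ))
    (μ ν : Measure S) [IsProbabilityMeasure ν] :
    Tendsto (fun δ : ℝ => ((δ⁻¹ : ℝ) : EReal) * gDiv (scaleSet δ Γ₀) μ ν)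
      (nhdsWithin 0 (Set.Ioi 0)) (nhds (wGamma Γ₀ μ ν)) := by
  have hexp (g : S →ᵇ ℝ) (δ : ℝ) : δ ∈ integrableExpSet g ν := by
    simp [g.integrableExpSet_eq_univ_s13 ν]
  have h_eq : (fun δ : ℝ => ⨆ g ∈ Γ₀, ((∫ x, g x ∂μ - δ⁻¹ * cgf g ν δ : ℝ) : EReal))
      =ᶠ[𝓝[>] 0] fun δ => ((δ⁻¹ : ℝ) : EReal) * gDiv (scaleSet δ Γ₀) μ ν :=
    eventually_mem_nhdsWithin.mono fun δ hδ => (inv_mul_gDiv_scaleSet hδ Γ₀ μ ν).symm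
  refine Tendsto.congr' h_eq (tendsto_biSup_of_tendsto_of_le (fun g _ => ?_) ?_)
  · exact EReal.tendsto_coe.2 (tendsto_const_nhds.sub
      (tendsto_inv_mul_cgf_nhdsGT_zero (by simp [g.integrableExpSet_eq_univ_s13 ν])))
  · filter_upwards [self_mem_nhdsWithin] with δ hδ g _
    exact EReal.coe_le_coe_iff.2 (sub_le_sub_left
      (integral_le_inv_mul_cgf (g.integrable ν) (hexp g δ) hδ) _)

/-- `lim_{δ→0⁺} (1/δ) G_{δΓ₀}(μ‖ν) = W_{Γ₀}(μ−ν)`. -/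
theorem gDiv_scale_small_tendsto_wGamma
    {S : Type*} [TopologicalSpace S] [PolishSpace S] [MeasurableSpace S] [BorelSpace S]
    (Γ₀ : Set (S →ᵇ ℝ)) (hΓ : Admissible Γ₀)
    (μ ν : Measure S) [IsProbabilityMeasure μ] [IsProbabilityMeasure ν] :
    Tendsto (fun δ : ℝ => ((δ⁻¹ : ℝ) : EReal) * gDiv (scaleSet δ Γ₀) μ ν)
      (nhdsWithin 0 (Set.Ioi 0)) (nhds (wGamma Γ₀ μ ν)) :=
  gDiv_scale_small_tendsto_wGamma_general Γ₀ μ ν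
end

section
/- Let μ = Unif[0, 1+c] and ν = Unif[0,1] for c > 0, and Γ the set of bounded 1-Lipschitz functions on ℝ. Let b ∈ (0,1) solve exp(1−b) − (1−b) = 1 + c. Then G_Γ(μ‖ν) = −log(1+c) + (1+c−b)²/(2(1+c)). -/
open MeasureTheory Real Filter

/-- The `Γ`-divergence for a set `Γ` of real functions on `ℝ`. -/
noncomputable def gDivF (Γ : Set (ℝ → ℝ)) (μ ν : Measure ℝ) : EReal :=
  ⨆ g ∈ Γ, (((∫ x, g x ∂μ) - Real.log (∫ x, Real.exp (g x) ∂ν) : ℝ) : EReal)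

/-- `W_Γ(μ − ν) = sup_{g ∈ Γ} ∫ g d(μ−ν)`. -/
noncomputable def wGammaF (Γ : Set (ℝ → ℝ)) (μ ν : Measure ℝ) : EReal :=
  ⨆ g ∈ Γ, (((∫ x, g x ∂μ) - ∫ x, g x ∂ν : ℝ) : EReal)

/-- Bounded `L`-Lipschitz functions on `ℝ`. -/
def lipSet (L : NNReal) : Set (ℝ → ℝ) :=
  {g : ℝ → ℝ | LipschitzWith L g ∧ ∃ C : ℝ, ∀ x, |g x| ≤ C}

/-- The uniform distribution on `[0, r]`. -/
noncomputable def unifMeas (r : ℝ) : Measure ℝ :=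
  (ENNReal.ofReal r)⁻¹ • volume.restrict (Set.Icc 0 r)

/-!
Write `B = 1 + c` and `g* = clamp (x - b) 0 (B - b)`. The equation for `b` says exactly
that `∫₀¹ e^{g*} = B`, so `γ* = e^{g*} ν / B` is a probability measure. For `g` 1-Lipschitz,
the tangent line `e^t ≥ 1 + t` (Jensen for `exp` under `γ*`) gives
`log ∫ e^g dν ≥ log B + ∫ (g - g*) dγ*`, which reduces the claim to
`∫ (g - g*) dμ ≤ ∫ (g - g*) dγ*`. Now `h = g - g*` is antitone on `[b, B]`, `μ` and `γ*`
agree on `[0, b]`, and `γ*` moves mass from `(1, B]`, where `h ≤ h 1`, to `(b, 1]`, where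
`h ≥ h 1`; hence the inequality.
-/

open Set

theorem le_log_integral_exp {α : Type*} [MeasurableSpace α] {μ : Measure α} {f g : α → ℝ}
    (hf : Integrable (fun x => exp (f x)) μ)
    (hgf : Integrable (fun x => (g x - f x) * exp (f x)) μ)
    (hg : Integrable (fun x => exp (g x)) μ) (hZ : 0 < ∫ x, exp (f x) ∂μ) :
    log (∫ x, exp (f x) ∂μ) + (∫ x, (g x - f x) * exp (f x) ∂μ) / ∫ x, exp (f x) ∂μ
      ≤ log (∫ x, exp (g x) ∂μ) := by
  set Z := ∫ x, exp (f x) ∂μ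
  set m := (∫ x, (g x - f x) * exp (f x) ∂μ) / Z
  have tangent : ∀ x, exp m * ((1 - m) * exp (f x) + (g x - f x) * exp (f x)) ≤ exp (g x) :=
    fun x => calc
      _ = exp m * exp (f x) * (g x - f x - m + 1) := by ring
      _ ≤ exp m * exp (f x) * exp (g x - f x - m) := by gcongr; exact add_one_le_exp _
      _ = exp (g x) := by rw [← exp_add, ← exp_add]; ring_nf
  have hmZ : exp m * Z ≤ ∫ x, exp (g x) ∂μ := calc
    exp m * Z = ∫ x, exp m * ((1 - m) * exp (f x) + (g x - f x) * exp (f x)) ∂μ := by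
        rw [integral_const_mul, integral_add (hf.const_mul _) hgf, integral_const_mul]
        simp only [m]; field_simp; ring
    _ ≤ _ := integral_mono ((hf.const_mul _).add hgf |>.const_mul _) hg tangent
  have := log_le_log (by positivity) hmZ
  rwa [log_mul (exp_pos m).ne' hZ.ne', log_exp, add_comm] at this

theorem LipschitzWith.monotone_id_sub {g : ℝ → ℝ} (hg : LipschitzWith 1 g) :
    Monotone fun x => x - g x := by
  intro x y hxy
  have := hg.le_add_mul y x
  rw [NNReal.coe_one, one_mul, Real.dist_eq, abs_of_nonneg (sub_nonneg.2 hxy)] at this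
  dsimp only
  linarith

theorem integral_unifMeas {r : ℝ} (hr : 0 < r) (f : ℝ → ℝ) :
    ∫ x, f x ∂unifMeas r = r⁻¹ * ∫ x in 0..r, f x := by
  rw [unifMeas, integral_smul_measure, ENNReal.toReal_inv, ENNReal.toReal_ofReal hr.le,
    intervalIntegral.integral_of_le hr.le, smul_eq_mul, integral_Icc_eq_integral_Ioc]

theorem Continuous.integrable_unifMeas {r : ℝ} (hr : 0 < r) {f : ℝ → ℝ}
    (hf : Continuous f) : Integrable f (unifMeas r) :=
  hf.integrableOn_Icc.smul_measure (ENNReal.inv_ne_top.2 (ENNReal.ofReal_pos.2 hr).ne')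

-- the optimizer `g*` of the paper, with `B = 1 + c`
noncomputable def clippedRamp (b B : ℝ) (x : ℝ) : ℝ := min (max (x - b) 0) (B - b)

section ClippedRamp

variable {b B x : ℝ}

theorem lipschitzWith_clippedRamp (b B : ℝ) : LipschitzWith 1 (clippedRamp b B) := by
  have hsub : LipschitzWith 1 fun x : ℝ => x - b := by
    simpa only [sub_eq_add_neg] using (isometry_add_right (-b)).lipschitz
  exact (hsub.max_const 0).min_const (B - b)

theorem continuous_clippedRamp (b B : ℝ) : Continuous (clippedRamp b B) :=
  (lipschitzWith_clippedRamp b B).continuous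

theorem clippedRamp_nonneg (hbB : b ≤ B) (x : ℝ) : 0 ≤ clippedRamp b B x :=
  le_min (le_max_right _ _) (sub_nonneg.2 hbB)

theorem clippedRamp_le (x : ℝ) : clippedRamp b B x ≤ B - b := min_le_right _ _

theorem clippedRamp_mem_lipSet (hbB : b ≤ B) : clippedRamp b B ∈ lipSet 1 :=
  ⟨lipschitzWith_clippedRamp b B, B - b, fun x =>
    abs_le.2 ⟨by linarith [clippedRamp_nonneg hbB x], clippedRamp_le x⟩⟩

theorem clippedRamp_of_le (hbB : b ≤ B) (hx : x ≤ b) : clippedRamp b B x = 0 := by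
  rw [clippedRamp, max_eq_right (by linarith), min_eq_left (by linarith)]

theorem clippedRamp_of_mem_Icc (hx : x ∈ Icc b B) : clippedRamp b B x = x - b := by
  rw [clippedRamp, max_eq_left (by linarith [hx.1]), min_eq_left (by linarith [hx.2])]

theorem integral_clippedRamp (hb : 0 ≤ b) (hbB : b ≤ B) :
    ∫ x in 0..B, clippedRamp b B x = (B - b) ^ 2 / 2 := by
  have hint := fun u v => (continuous_clippedRamp b B).intervalIntegrable (μ := volume) u v
  have flat : ∫ x in 0..b, clippedRamp b B x = 0 := by
    rw [intervalIntegral.integral_congr (g := fun _ => 0) fun x hx =>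
      clippedRamp_of_le hbB (uIcc_of_le hb ▸ hx).2, intervalIntegral.integral_zero]
  have ramp : ∫ x in b..B, clippedRamp b B x = (B - b) ^ 2 / 2 := by
    rw [intervalIntegral.integral_congr (g := fun x => x - b) fun x hx =>
      clippedRamp_of_mem_Icc (uIcc_of_le hbB ▸ hx),
      intervalIntegral.integral_comp_sub_right (fun x => x), integral_id]
    ring
  rw [← intervalIntegral.integral_add_adjacent_intervals (hint 0 b) (hint b B), flat, ramp,
    zero_add]

theorem integral_exp_clippedRamp (hb : 0 ≤ b) (hb1 : b ≤ 1) (hB : 1 ≤ B) :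
    ∫ x in 0..1, exp (clippedRamp b B x) = b + exp (1 - b) - 1 := by
  have hint := fun u v =>
    (continuous_clippedRamp b B).rexp.intervalIntegrable (μ := volume) u v
  have flat : ∫ x in 0..b, exp (clippedRamp b B x) = b := by
    rw [intervalIntegral.integral_congr (g := fun _ => 1) fun x hx => by
      rw [clippedRamp_of_le (hb1.trans hB) (uIcc_of_le hb ▸ hx).2, exp_zero]]
    simp
  have ramp : ∫ x in b..1, exp (clippedRamp b B x) = exp (1 - b) - 1 := by
    rw [intervalIntegral.integral_congr (g := fun x => exp (x - b)) fun x hx => by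
      have hx := uIcc_of_le hb1 ▸ hx
      rw [clippedRamp_of_mem_Icc ⟨hx.1, hx.2.trans hB⟩],
      intervalIntegral.integral_comp_sub_right (fun x => exp x), integral_exp, sub_self,
      exp_zero]
  rw [← intervalIntegral.integral_add_adjacent_intervals (hint 0 b) (hint b 1), flat, ramp]
  ring

end ClippedRamp

theorem integral_sub_clippedRamp_le {b B : ℝ} (hb : 0 ≤ b) (hb1 : b ≤ 1) (hB : 1 ≤ B)
    (hE : exp (1 - b) = B + 1 - b) {g : ℝ → ℝ} (hg : Continuous g)
    (hmono : Monotone fun x => x - g x) :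
    ∫ x in 0..B, (g x - clippedRamp b B x)
      ≤ ∫ x in 0..1, (g x - clippedRamp b B x) * exp (clippedRamp b B x) := by
  set e := fun x => exp (clippedRamp b B x)
  set h := fun x => g x - clippedRamp b B x
  have he : Continuous e := (continuous_clippedRamp b B).rexp
  have hh : Continuous h := hg.sub (continuous_clippedRamp b B)
  have h_of_mem {x} (hx : x ∈ Icc b B) : h x = b - (x - g x) := by
    simp only [h, clippedRamp_of_mem_Icc hx]; ring
  have h_le {x y} (hx : x ∈ Icc b B) (hy : y ∈ Icc b B) (hxy : x ≤ y) : h y ≤ h x := by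
    rw [h_of_mem hx, h_of_mem hy]; linarith [hmono hxy]
  have h1 : (1 : ℝ) ∈ Icc b B := ⟨hb1, hB⟩
  have tail : ∫ x in 1..B, h x ≤ (B - 1) * h 1 := calc
    _ ≤ ∫ _ in 1..B, h 1 := intervalIntegral.integral_mono_on hB (hh.intervalIntegrable 1 B)
          intervalIntegrable_const fun x hx => h_le h1 ⟨hb1.trans hx.1, hx.2⟩ hx.1
    _ = (B - 1) * h 1 := by simp
  have hw : Continuous fun x => h 1 * (e x - 1) := by fun_prop
  -- the weight `e` exceeds `1` only on `(b, 1]`, where `h ≥ h 1`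
  have head : (∫ x in 0..1, h x) + (B - 1) * h 1 ≤ ∫ x in 0..1, h x * e x := calc
    _ = ∫ x in 0..1, (h x + h 1 * (e x - 1)) := by
        rw [intervalIntegral.integral_add (hh.intervalIntegrable 0 1)
            (hw.intervalIntegrable 0 1),
          intervalIntegral.integral_const_mul,
          intervalIntegral.integral_sub (he.intervalIntegrable 0 1) intervalIntegrable_const,
          integral_exp_clippedRamp hb hb1 hB, hE]
        simp only [intervalIntegral.integral_const]
        ring
    _ ≤ _ := by
        refine intervalIntegral.integral_mono_on zero_le_one
          ((hh.add hw).intervalIntegrable 0 1)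
          ((hh.mul he).intervalIntegrable 0 1) fun x hx => ?_
        rcases le_total x b with hxb | hbx
        · simp [e, clippedRamp_of_le (hb1.trans hB) hxb]
        · have hle : h 1 ≤ h x := h_le ⟨hbx, hx.2.trans hB⟩ h1 hx.2
          have : 1 ≤ e x := one_le_exp (clippedRamp_nonneg (hb1.trans hB) x)
          nlinarith
  change ∫ x in 0..B, h x ≤ ∫ x in 0..1, h x * e x
  rw [← intervalIntegral.integral_add_adjacent_intervals (hh.intervalIntegrable 0 1)
    (hh.intervalIntegrable 1 B)]
  linarith

theorem gDivF_eq_of_forall_le {Γ : Set (ℝ → ℝ)} {μ ν : Measure ℝ} {g₀ : ℝ → ℝ}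
    (hg₀ : g₀ ∈ Γ)
    (hle : ∀ g ∈ Γ, (∫ x, g x ∂μ) - log (∫ x, exp (g x) ∂ν)
      ≤ (∫ x, g₀ x ∂μ) - log (∫ x, exp (g₀ x) ∂ν)) :
    gDivF Γ μ ν = (((∫ x, g₀ x ∂μ) - log (∫ x, exp (g₀ x) ∂ν) : ℝ) : EReal) :=
  le_antisymm (iSup₂_le fun g hg => EReal.coe_le_coe_iff.2 (hle g hg))
    (le_iSup₂_of_le g₀ hg₀ le_rfl)

section Optimality

variable {b B : ℝ} (hb : 0 ≤ b) (hb1 : b ≤ 1) (hB : 1 ≤ B) (hE : exp (1 - b) = B + 1 - b)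
include hb hb1 hB hE

theorem integral_exp_clippedRamp_unifMeas_one :
    ∫ x, exp (clippedRamp b B x) ∂unifMeas 1 = B := by
  rw [integral_unifMeas one_pos, integral_exp_clippedRamp hb hb1 hB, hE]
  ring

theorem objective_le_clippedRamp {g : ℝ → ℝ} (hg : LipschitzWith 1 g) :
    (∫ x, g x ∂unifMeas B) - log (∫ x, exp (g x) ∂unifMeas 1)
      ≤ (∫ x, clippedRamp b B x ∂unifMeas B)
        - log (∫ x, exp (clippedRamp b B x) ∂unifMeas 1) := by
  have hB0 : 0 < B := one_pos.trans_le hB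
  have hZ := integral_exp_clippedRamp_unifMeas_one hb hb1 hB hE
  have hc := continuous_clippedRamp b B
  have gibbs := le_log_integral_exp (μ := unifMeas 1) (f := clippedRamp b B) (g := g)
    (hc.rexp.integrable_unifMeas one_pos)
    (((hg.continuous.sub hc).mul hc.rexp).integrable_unifMeas one_pos)
    (hg.continuous.rexp.integrable_unifMeas one_pos) (hZ.symm ▸ hB0)
  have cmp := integral_sub_clippedRamp_le hb hb1 hB hE hg.continuous hg.monotone_id_sub
  rw [intervalIntegral.integral_sub (hg.continuous.intervalIntegrable _ _)
    (hc.intervalIntegrable _ _)] at cmp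
  rw [hZ, integral_unifMeas one_pos, inv_one, one_mul, div_eq_inv_mul] at gibbs
  rw [integral_unifMeas hB0, integral_unifMeas hB0, hZ]
  linarith [mul_le_mul_of_nonneg_left cmp (inv_nonneg.2 hB0.le)]

end Optimality

/-- For `μ = Unif[0, 1+c]`, `ν = Unif[0,1]`, `Γ` the bounded 1-Lipschitz functions, and
`b ∈ (0,1)` solving `e^{1−b} − (1−b) = 1+c`:
`G_Γ(μ‖ν) = −log(1+c) + (1+c−b)²/(2(1+c))`. -/
theorem gDiv_unif_extended
    (c b : ℝ) (hc : 0 < c) (hb0 : 0 < b) (hb1 : b < 1)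
    (hbeq : Real.exp (1 - b) - (1 - b) = 1 + c) :
    gDivF (lipSet 1) (unifMeas (1 + c)) (unifMeas 1)
      = ((-Real.log (1 + c) + (1 + c - b) ^ 2 / (2 * (1 + c)) : ℝ) : EReal) := by
  have hB : 1 ≤ 1 + c := by linarith
  have hE : exp (1 - b) = 1 + c + 1 - b := by linarith
  rw [gDivF_eq_of_forall_le (clippedRamp_mem_lipSet (by linarith)) fun g hg =>
      objective_le_clippedRamp hb0.le hb1.le hB hE hg.1,
    integral_exp_clippedRamp_unifMeas_one hb0.le hb1.le hB hE,
    integral_unifMeas (by linarith), integral_clippedRamp hb0.le (by linarith)]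
  congr 1
  field_simp
  ring
end

section
/- Let S = ℝ, ν = Unif[0,1], μ = δ₀ (Dirac mass at 0), and for b > 0 let bΓ₀ be the set of bounded b-Lipschitz functions. Then G_{bΓ₀}(μ‖ν) = log( b / (1 − e^{−b}) ). In particular G_{bΓ₀}(μ‖ν) = log b + o(log b) as b → ∞, while the scaled transport cost W_{b|·|}(μ,ν) = b/2. -/
open MeasureTheory Real Filter

/-! A `K`-Lipschitz `g` satisfies `g x ≥ g 0 - K x` on `[0, 1]`, so for every monotone `φ`
the `ν`-average of `φ ∘ g` is at least that of `x ↦ φ (g 0 - K x)`. With `φ = exp` and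
`φ = id` this bounds both suprema by their values at `g*(x) = -K x`; clamped outside `[0, 1]`,
`g*` is bounded and `K`-Lipschitz, so both bounds are attained. -/

open Set NNReal

lemma biSup_eq_of_forall_le_of_eq {α β : Type*} [CompleteLattice β] {s : Set α} {f : α → β}
    {c : β} (hle : ∀ a ∈ s, f a ≤ c) {a₀ : α} (ha₀ : a₀ ∈ s) (hc : f a₀ = c) :
    ⨆ a ∈ s, f a = c :=
  le_antisymm (iSup₂_le hle) (hc ▸ le_iSup₂_of_le a₀ ha₀ le_rfl)

lemma one_sub_exp_neg_pos {K : ℝ} (hK : 0 < K) : 0 < 1 - exp (-K) :=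
  sub_pos.mpr (exp_lt_one_iff.mpr (neg_neg_of_pos hK))

lemma unifMeas_one : unifMeas 1 = volume.restrict (Icc 0 1) := by
  simp [unifMeas]

lemma setIntegral_Icc_exp_neg_mul {b : ℝ} (hb : b ≠ 0) :
    ∫ x in Icc (0 : ℝ) 1, exp (-(b * x)) = (1 - exp (-b)) / b := by
  rw [integral_Icc_eq_integral_Ioc, ← intervalIntegral.integral_of_le zero_le_one]
  simp_rw [← neg_mul]
  rw [intervalIntegral.integral_comp_mul_left exp (neg_ne_zero.mpr hb), integral_exp]
  simp only [smul_eq_mul, mul_one, mul_zero, exp_zero, inv_neg, div_eq_inv_mul]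
  ring

lemma setIntegral_Icc_sub_mul (c K : ℝ) : ∫ x in Icc (0 : ℝ) 1, (c - K * x) = c - K / 2 := by
  rw [integral_Icc_eq_integral_Ioc, ← intervalIntegral.integral_of_le zero_le_one,
    intervalIntegral.integral_sub intervalIntegrable_const
      ((continuous_const_mul K).intervalIntegrable 0 1),
    intervalIntegral.integral_const_mul, integral_id]
  norm_num
  ring

lemma LipschitzWith.setIntegral_Icc_comp_sub_mul_le {φ : ℝ → ℝ} (hφ : Monotone φ)
    (hφc : Continuous φ) {K : ℝ≥0} {g : ℝ → ℝ} (hg : LipschitzWith K g) :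
    ∫ x in Icc (0 : ℝ) 1, φ (g 0 - K * x) ≤ ∫ x in Icc (0 : ℝ) 1, φ (g x) := by
  refine setIntegral_mono_on ?_ (hφc.comp hg.continuous).integrableOn_Icc measurableSet_Icc
    fun x hx => hφ ?_
  · exact (hφc.comp (by fun_prop)).integrableOn_Icc
  · have := hg.le_add_mul 0 x
    rw [Real.dist_eq, zero_sub, abs_neg, abs_of_nonneg hx.1] at this
    linarith

def rampDown (K : ℝ) (x : ℝ) : ℝ := -K * max 0 (min x 1)

lemma rampDown_zero (K : ℝ) : rampDown K 0 = 0 := by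
  simp [rampDown]

lemma rampDown_mem_lipSet (K : ℝ≥0) : rampDown K ∈ lipSet K := by
  refine ⟨fun x y => ?_, K, fun x => ?_⟩
  · have h := (lipschitzWith_smul (-(K : ℝ))).comp ((LipschitzWith.id.min_const 1).const_max 0)
    simpa [rampDown] using h x y
  · have h : |max 0 (min x 1)| ≤ 1 := abs_le.mpr ⟨by simp, by simp⟩
    rw [rampDown, abs_mul, abs_neg, NNReal.abs_eq]
    exact mul_le_of_le_one_right K.2 h

lemma rampDown_eqOn (K : ℝ) : EqOn (rampDown K) (fun x => rampDown K 0 - K * x) (Icc 0 1) :=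
  fun x hx => by simp [rampDown, min_eq_left hx.2, max_eq_right hx.1]

lemma setIntegral_Icc_exp_sub_mul {K : ℝ} (hK : K ≠ 0) (c : ℝ) :
    ∫ x in Icc (0 : ℝ) 1, exp (c - K * x) = exp c * ((1 - exp (-K)) / K) := by
  simp_rw [sub_eq_add_neg c, exp_add]
  rw [integral_const_mul, setIntegral_Icc_exp_neg_mul hK]

lemma log_setIntegral_Icc_exp_sub_mul {K : ℝ} (hK : 0 < K) (c : ℝ) :
    log (∫ x in Icc (0 : ℝ) 1, exp (c - K * x)) = c - log (K / (1 - exp (-K))) := by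
  have := one_sub_exp_neg_pos hK
  rw [setIntegral_Icc_exp_sub_mul hK.ne', log_mul (exp_pos c).ne' (by positivity), log_exp,
    ← inv_div, log_inv]
  ring

theorem gDivF_lipSet_dirac_unifMeas {K : ℝ≥0} (hK : 0 < K) :
    gDivF (lipSet K) (Measure.dirac 0) (unifMeas 1)
      = ((log (K / (1 - exp (-K))) : ℝ) : EReal) := by
  have hK' : (0 : ℝ) < K := hK
  refine biSup_eq_of_forall_le_of_eq (fun g ⟨hg, _⟩ => ?_) (rampDown_mem_lipSet K) ?_
  · rw [EReal.coe_le_coe_iff, integral_dirac, unifMeas_one]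
    have hle := hg.setIntegral_Icc_comp_sub_mul_le exp_monotone continuous_exp
    have hpos : 0 < ∫ x in Icc (0 : ℝ) 1, exp (g 0 - K * x) := by
      rw [setIntegral_Icc_exp_sub_mul hK'.ne']
      exact mul_pos (exp_pos _) (div_pos (one_sub_exp_neg_pos hK') hK')
    have := log_le_log hpos hle
    rw [log_setIntegral_Icc_exp_sub_mul hK'] at this
    linarith
  · rw [EReal.coe_eq_coe_iff, integral_dirac, unifMeas_one,
      setIntegral_congr_fun measurableSet_Icc fun x hx => congrArg exp (rampDown_eqOn K hx),
      log_setIntegral_Icc_exp_sub_mul hK', rampDown_zero]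
    ring

theorem wGammaF_lipSet_dirac_unifMeas (K : ℝ≥0) :
    wGammaF (lipSet K) (Measure.dirac 0) (unifMeas 1) = ((K / 2 : ℝ) : EReal) := by
  refine biSup_eq_of_forall_le_of_eq (fun g ⟨hg, _⟩ => ?_) (rampDown_mem_lipSet K) ?_
  · rw [EReal.coe_le_coe_iff, integral_dirac, unifMeas_one]
    have := hg.setIntegral_Icc_comp_sub_mul_le (φ := id) monotone_id continuous_id
    simp only [id, setIntegral_Icc_sub_mul] at this
    linarith
  · rw [EReal.coe_eq_coe_iff, integral_dirac, unifMeas_one,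
      setIntegral_congr_fun measurableSet_Icc (rampDown_eqOn K), setIntegral_Icc_sub_mul,
      rampDown_zero]
    ring

lemma tendsto_log_div_one_sub_exp_neg_div_log :
    Tendsto (fun b => log (b / (1 - exp (-b))) / log b) atTop (nhds 1) := by
  have hlog : Tendsto (fun b => log (1 - exp (-b))) atTop (nhds 0) := by
    have h : Tendsto (fun b => 1 - exp (-b)) atTop (nhds 1) := by
      simpa using tendsto_exp_neg_atTop_nhds_zero.const_sub 1
    simpa [Function.comp_def] using (continuousAt_log one_ne_zero).tendsto.comp h
  have hmain := (hlog.div_atTop tendsto_log_atTop).const_sub 1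
  rw [sub_zero] at hmain
  refine hmain.congr' ?_
  filter_upwards [eventually_gt_atTop 1] with b hb
  rw [log_div (by linarith) (one_sub_exp_neg_pos (by linarith)).ne']
  field_simp [(log_pos hb).ne']

/-- For `ν = Unif[0,1]`, `μ = δ₀`, and `bΓ₀` the bounded `b`-Lipschitz functions:
`G_{bΓ₀}(μ‖ν) = log(b/(1 − e^{−b}))`, hence `G_{bΓ₀}(μ‖ν) = log b + o(log b)` as `b → ∞`,
while `W_{b|·|}(μ,ν) = b/2`. -/
theorem gDiv_dirac_unif :
    (∀ b : ℝ, 0 < b →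
        gDivF (lipSet (Real.toNNReal b)) (Measure.dirac 0) (unifMeas 1)
          = ((Real.log (b / (1 - Real.exp (-b))) : ℝ) : EReal)) ∧
    Tendsto (fun b : ℝ =>
        (gDivF (lipSet (Real.toNNReal b)) (Measure.dirac 0) (unifMeas 1)).toReal / Real.log b)
      atTop (nhds 1) ∧
    (∀ b : ℝ, 0 < b →
        wGammaF (lipSet (Real.toNNReal b)) (Measure.dirac 0) (unifMeas 1)
          = ((b / 2 : ℝ) : EReal)) := by
  have hG (b : ℝ) (hb : 0 < b) :
      gDivF (lipSet b.toNNReal) (Measure.dirac 0) (unifMeas 1)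
        = ((log (b / (1 - exp (-b))) : ℝ) : EReal) := by
    simpa [hb.le] using gDivF_lipSet_dirac_unifMeas (toNNReal_pos.mpr hb)
  refine ⟨hG, tendsto_log_div_one_sub_exp_neg_div_log.congr' ?_, fun b hb => ?_⟩
  · filter_upwards [eventually_gt_atTop 0] with b hb
    rw [hG b hb, EReal.toReal_coe]
  · simpa [hb.le] using wGammaF_lipSet_dirac_unifMeas b.toNNReal
end

section
/- Let μ = N(0, σ₁²) and ν = N(0, σ₂²) be centered Gaussians on ℝ with 0 < σ₁ < σ₂, and let Γ = { g ∈ C_b(ℝ) ∩ C¹(ℝ) : g' is 1-Lipschitz }. Then W_Γ(μ − ν) ≔ sup_{g ∈ Γ} ∫ g d(μ − ν) = (σ₂² − σ₁²)/2. -/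
open MeasureTheory ProbabilityTheory Real
open scoped NNReal ENNReal

section Helpers

open Set intervalIntegral

namespace WGaux

noncomputable def pdfNN (v : ℝ≥0) : ℝ → ℝ≥0 := fun x => (gaussianPDFReal 0 v x).toNNReal

lemma pdfNN_meas (v : ℝ≥0) : Measurable (pdfNN v) :=
  (measurable_gaussianPDFReal 0 v).real_toNNReal

lemma gaussianReal_eq (v : ℝ≥0) (hv : v ≠ 0) :
    gaussianReal 0 v = volume.withDensity (fun x => (pdfNN v x : ℝ≥0∞)) := by
  rw [gaussianReal_of_var_ne_zero _ hv]
  rfl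

lemma coe_pdfNN (v : ℝ≥0) (x : ℝ) : (pdfNN v x : ℝ) = gaussianPDFReal 0 v x :=
  Real.coe_toNNReal _ (gaussianPDFReal_nonneg 0 v x)

lemma integral_gauss (v : ℝ≥0) (hv : v ≠ 0) (f : ℝ → ℝ) :
    ∫ x, f x ∂(gaussianReal 0 v) = ∫ x, gaussianPDFReal 0 v x * f x := by
  rw [gaussianReal_eq v hv, integral_withDensity_eq_integral_smul (pdfNN_meas v) f]
  refine integral_congr_ae (Filter.Eventually.of_forall fun x => ?_)
  simp [NNReal.smul_def, coe_pdfNN]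

lemma integrable_gauss_iff (v : ℝ≥0) (hv : v ≠ 0) (f : ℝ → ℝ) :
    Integrable f (gaussianReal 0 v) ↔
      Integrable (fun x => gaussianPDFReal 0 v x * f x) := by
  rw [gaussianReal_eq v hv, integrable_withDensity_iff_integrable_smul (pdfNN_meas v)]
  constructor <;> intro h <;> refine h.congr (Filter.Eventually.of_forall fun x => ?_) <;>
    simp [NNReal.smul_def, coe_pdfNN]

lemma pdf_eq (v : ℝ≥0) (x : ℝ) :
    gaussianPDFReal 0 v x
      = (Real.sqrt (2 * π * v))⁻¹ * Real.exp (-(1/(2*(v:ℝ))) * x ^ 2) := by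
  rw [gaussianPDFReal]
  rw [sub_zero]
  congr 1
  ring_nf

lemma integral_id_gauss (v : ℝ≥0) (hv : v ≠ 0) :
    ∫ x, x ∂(gaussianReal 0 v) = 0 := by
  rw [integral_gauss v hv]
  set h : ℝ → ℝ := fun x => gaussianPDFReal 0 v x * x with hh
  have heq : ∫ x, h x = ∫ x, h (-x) := by
    conv_lhs => rw [← Measure.map_neg_eq_self (volume : Measure ℝ)]
    exact MeasureTheory.integral_map_equiv (MeasurableEquiv.neg ℝ) h
  have hodd : ∀ x, h (-x) = - h x := by
    intro x
    simp only [hh, pdf_eq]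
    ring_nf
  rw [show (fun x => h (-x)) = fun x => - h x from funext hodd] at heq
  rw [MeasureTheory.integral_neg] at heq
  linarith [heq]

lemma integrable_sq_gauss (v : ℝ≥0) (hv : v ≠ 0) :
    Integrable (fun x : ℝ => x ^ 2) (gaussianReal 0 v) := by
  rw [integrable_gauss_iff v hv]
  have hb : 0 < 1/(2*(v:ℝ)) := by positivity
  refine Integrable.mono'
    (((integrable_rpow_mul_exp_neg_mul_sq hb (by norm_num : (-1:ℝ) < 2))).const_mul
      ((Real.sqrt (2 * π * v))⁻¹)) ?_ (Filter.Eventually.of_forall fun x => ?_)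
  · exact ((measurable_gaussianPDFReal 0 v).mul (measurable_id.pow_const 2)).aestronglyMeasurable
  · have hnn : (0:ℝ) ≤ gaussianPDFReal 0 v x * x ^ 2 :=
      mul_nonneg (gaussianPDFReal_nonneg 0 v x) (sq_nonneg _)
    rw [Real.norm_of_nonneg hnn]
    refine le_of_eq ?_
    rw [pdf_eq, show x ^ (2:ℝ) = x ^ 2 by
      rw [show (2:ℝ) = ((2:ℕ):ℝ) by norm_num, Real.rpow_natCast]]
    ring

lemma integrable_id_gauss (v : ℝ≥0) (hv : v ≠ 0) :
    Integrable (fun x : ℝ => x) (gaussianReal 0 v) := by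
  refine Integrable.mono' ((integrable_const (1:ℝ)).add (integrable_sq_gauss v hv))
    measurable_id.aestronglyMeasurable (Filter.Eventually.of_forall fun x => ?_)
  simp only [Pi.add_apply]
  rw [Real.norm_eq_abs]
  nlinarith [sq_nonneg (|x| - 1), sq_abs x, abs_nonneg x]

lemma integral_sq_lebesgue (v : ℝ) (hv : 0 < v) :
    ∫ x : ℝ, (Real.sqrt (2 * π * v))⁻¹ * Real.exp (-(1/(2*v)) * x ^ 2) * x ^ 2 = v := by
  have hb : 0 < 1/(2*v) := by positivity
  have key := integral_comp_abs
    (f := fun y : ℝ => (Real.sqrt (2 * π * v))⁻¹ * (y ^ 2 * Real.exp (-(1/(2*v)) * y ^ 2)))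
  have habs : ∫ x : ℝ, (Real.sqrt (2 * π * v))⁻¹ * Real.exp (-(1/(2*v)) * x ^ 2) * x ^ 2
      = ∫ x : ℝ, (Real.sqrt (2 * π * v))⁻¹ * (|x| ^ 2 * Real.exp (-(1/(2*v)) * |x| ^ 2)) :=
    integral_congr_ae (Filter.Eventually.of_forall fun x => by
      simp only [sq_abs]; ring)
  rw [habs, key, MeasureTheory.integral_const_mul]
  have h2 : ∀ y ∈ Ioi (0:ℝ), y ^ 2 * Real.exp (-(1/(2*v)) * y ^ 2)
      = y ^ (2:ℝ) * Real.exp (-(1/(2*v)) * y ^ (2:ℝ)) := by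
    intro y hy
    rw [show y ^ (2:ℝ) = y ^ 2 by rw [show (2:ℝ) = ((2:ℕ):ℝ) by norm_num, Real.rpow_natCast]]
  rw [setIntegral_congr_fun measurableSet_Ioi h2,
    integral_rpow_mul_exp_neg_mul_rpow (by norm_num) (by norm_num) hb]
  have hG : Real.Gamma ((2 + 1)/2) = (1/2) * Real.sqrt π := by
    rw [show ((2:ℝ)+1)/2 = 1/2 + 1 by norm_num, Real.Gamma_add_one (by norm_num),
      Real.Gamma_one_half_eq]
  rw [hG]
  have h2v : (0:ℝ) < 2 * v := by positivity
  have hbpow : (1/(2*v)) ^ (-((2:ℝ)+1)/2) = (2*v) * Real.sqrt (2*v) := by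
    rw [one_div, Real.inv_rpow h2v.le, show (-((2:ℝ)+1)/2) = -((3:ℝ)/2) by norm_num,
      Real.rpow_neg h2v.le, inv_inv, show ((3:ℝ)/2) = 1 + 1/2 by norm_num,
      Real.rpow_add h2v, Real.rpow_one, ← Real.sqrt_eq_rpow]
  rw [hbpow]
  have hsq : Real.sqrt (2*v) * Real.sqrt (2*v) = 2*v := Real.mul_self_sqrt h2v.le
  have hsrt : Real.sqrt (2 * π * v) = Real.sqrt π * Real.sqrt (2*v) := by
    rw [show 2*π*v = π*(2*v) by ring, Real.sqrt_mul pi_pos.le]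
  rw [hsrt]
  have hpne : Real.sqrt π ≠ 0 := ne_of_gt (Real.sqrt_pos.mpr pi_pos)
  have hsne : Real.sqrt (2*v) ≠ 0 := ne_of_gt (Real.sqrt_pos.mpr h2v)
  field_simp

lemma integral_sq_gauss (v : ℝ≥0) (hv : v ≠ 0) :
    ∫ x, x ^ 2 ∂(gaussianReal 0 v) = v := by
  have hvpos : 0 < (v:ℝ) := by positivity
  rw [integral_gauss v hv]
  have : ∀ x : ℝ, gaussianPDFReal 0 v x * x ^ 2
      = (Real.sqrt (2 * π * v))⁻¹ * Real.exp (-(1/(2*(v:ℝ))) * x ^ 2) * x ^ 2 := by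
    intro x; rw [pdf_eq]
  rw [integral_congr_ae (Filter.Eventually.of_forall this), integral_sq_lebesgue (v:ℝ) hvpos]

lemma integral_cos_lebesgue (v t : ℝ) (hv : 0 < v) :
    ∫ x : ℝ, Real.exp (-(1/(2*v)) * x ^ 2) * Real.cos (t * x)
      = Real.sqrt (2*π*v) * Real.exp (-(t^2*v/2)) := by
  have hb : (0:ℝ) < 1/(2*v) := by positivity
  have hbC : ((-(1/(2*v)) : ℝ) : ℂ).re < 0 := by simpa using neg_lt_zero.mpr hb
  have hint := integrable_cexp_quadratic' hbC (t*Complex.I) 0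
  have key := integral_cexp_quadratic hbC (t*Complex.I) 0
  have hre : ∀ x : ℝ, (Complex.exp (((-(1/(2*v)) : ℝ) : ℂ) * (x:ℂ)^2 + (t*Complex.I)*(x:ℂ) + 0)).re
      = Real.exp (-(1/(2*v)) * x ^ 2) * Real.cos (t * x) := by
    intro x
    rw [Complex.exp_re]
    have h1 : (((-(1/(2*v)) : ℝ) : ℂ) * (x:ℂ)^2 + (t*Complex.I)*(x:ℂ) + 0).re
        = -(1/(2*v)) * x ^ 2 := by
      simp [Complex.add_re, Complex.mul_re, Complex.mul_im, ← Complex.ofReal_pow]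
    have h2 : (((-(1/(2*v)) : ℝ) : ℂ) * (x:ℂ)^2 + (t*Complex.I)*(x:ℂ) + 0).im = t * x := by
      simp [Complex.add_im, Complex.mul_re, Complex.mul_im, ← Complex.ofReal_pow]
    rw [h1, h2]
  have hL : ∫ x : ℝ, Real.exp (-(1/(2*v)) * x ^ 2) * Real.cos (t * x)
      = (∫ x : ℝ, Complex.exp (((-(1/(2*v)) : ℝ) : ℂ) * (x:ℂ)^2 + (t*Complex.I)*(x:ℂ) + 0)).re := by
    have := integral_re hint
    simp only [RCLike.re_to_complex] at this ⊢
    rw [← this]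
    exact integral_congr_ae (Filter.Eventually.of_forall fun x => (hre x).symm)
  rw [hL, key]
  have hne : ((-(1/(2*v)) : ℝ) : ℂ) ≠ 0 := by
    simp only [ne_eq, Complex.ofReal_eq_zero]
    intro h
    exact absurd (neg_eq_zero.mp h) (ne_of_gt hb)
  have h4b : (0:ℂ) - (t*Complex.I)^2 / (4 * ((-(1/(2*v)) : ℝ) : ℂ)) = ((-(t^2*v/2) : ℝ) : ℂ) := by
    have hvC : (v:ℂ) ≠ 0 := by
      simp only [ne_eq, Complex.ofReal_eq_zero]; exact ne_of_gt hv
    rw [mul_pow, Complex.I_sq]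
    push_cast
    field_simp
    ring
  have hπb : (π : ℂ) / -((-(1/(2*v)) : ℝ) : ℂ) = ((2*π*v : ℝ) : ℂ) := by
    have hvC : (v:ℂ) ≠ 0 := by
      simp only [ne_eq, Complex.ofReal_eq_zero]; exact ne_of_gt hv
    push_cast
    field_simp
  rw [h4b, hπb, show (1/2 : ℂ) = ((1/2 : ℝ) : ℂ) by norm_num,
    ← Complex.ofReal_cpow (by positivity), ← Complex.ofReal_exp, ← Complex.ofReal_mul,
    Complex.ofReal_re, ← Real.sqrt_eq_rpow]

lemma integral_cos_gauss (v : ℝ≥0) (hv : v ≠ 0) (t : ℝ) :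
    ∫ x, Real.cos (t * x) ∂(gaussianReal 0 v) = Real.exp (-(t^2*(v:ℝ)/2)) := by
  have hvpos : 0 < (v:ℝ) := by positivity
  rw [integral_gauss v hv]
  have heq : ∀ x : ℝ, gaussianPDFReal 0 v x * Real.cos (t * x)
      = (Real.sqrt (2 * π * v))⁻¹ * (Real.exp (-(1/(2*(v:ℝ))) * x ^ 2) * Real.cos (t * x)) := by
    intro x; rw [pdf_eq]; ring
  rw [integral_congr_ae (Filter.Eventually.of_forall heq), MeasureTheory.integral_const_mul,
    integral_cos_lebesgue (v:ℝ) t hvpos, ← mul_assoc,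
    inv_mul_cancel₀ (ne_of_gt (Real.sqrt_pos.mpr (by positivity))), one_mul]

lemma integrable_of_bounded {v : ℝ≥0} {g : ℝ → ℝ} (hgc : Continuous g)
    (hb : ∃ C : ℝ, ∀ x, |g x| ≤ C) :
    Integrable g (gaussianReal 0 v) := by
  obtain ⟨C, hC⟩ := hb
  exact Integrable.mono' (integrable_const C) hgc.aestronglyMeasurable
    (Filter.Eventually.of_forall fun x => by rw [Real.norm_eq_abs]; exact hC x)

lemma key_pt (g : ℝ → ℝ) (hg : Differentiable ℝ g) (hl : LipschitzWith 1 (deriv g))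
    (c : ℝ) (hc : 1 ≤ c) (x : ℝ) :
    g x - g (c*x) + deriv g 0 * ((c-1)*x) ≤ (c^2-1) * x^2 / 2 := by
  have hcont : Continuous (deriv g) := hl.continuous
  have hbnd : ∀ t : ℝ, |deriv g t - deriv g 0| ≤ |t| := by
    intro t
    have := hl.dist_le_mul t 0
    simpa [Real.dist_eq] using this
  have hftc : ∫ t in x..(c*x), deriv g t = g (c*x) - g x :=
    integral_deriv_eq_sub (fun t _ => hg t)
      (hcont.intervalIntegrable _ _)
  have hsplit : ∫ t in x..(c*x), deriv g t
      = (∫ t in x..(c*x), (deriv g t - deriv g 0)) + (c*x - x) * deriv g 0 := by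
    rw [integral_sub (hcont.intervalIntegrable _ _) (intervalIntegrable_const)]
    rw [intervalIntegral.integral_const]
    ring_nf
  have hmain : -((c^2-1) * x^2 / 2) ≤ ∫ t in x..(c*x), (deriv g t - deriv g 0) := by
    have hie : IntervalIntegrable (fun t => deriv g t - deriv g 0) volume x (c*x) :=
      (hcont.sub continuous_const).intervalIntegrable _ _
    have hie' : IntervalIntegrable (fun t => deriv g t - deriv g 0) volume (c*x) x :=
      hie.symm
    rcases le_or_gt 0 x with hx | hx
    · have hxc : x ≤ c*x := le_mul_of_one_le_left hx hc
      have h1 : ∫ t in x..(c*x), (-t) ≤ ∫ t in x..(c*x), (deriv g t - deriv g 0) := by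
        refine integral_mono_on hxc ((continuous_neg.comp continuous_id).intervalIntegrable _ _)
          hie (fun t ht => ?_)
        have ht0 : 0 ≤ t := le_trans hx ht.1
        have := (abs_le.mp (hbnd t)).1
        rw [abs_of_nonneg ht0] at this
        linarith
      have h2 : ∫ t in x..(c*x), (-t : ℝ) = -(((c*x)^2 - x^2)/2) := by
        rw [intervalIntegral.integral_neg, integral_id]
      rw [h2] at h1
      nlinarith [h1]
    · have hxc : c*x ≤ x := by nlinarith
      have h1 : ∫ t in (c*x)..x, (deriv g t - deriv g 0) ≤ ∫ t in (c*x)..x, (-t) := by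
        refine integral_mono_on hxc hie'
          ((continuous_neg.comp continuous_id).intervalIntegrable _ _) (fun t ht => ?_)
        have ht0 : t ≤ 0 := le_trans ht.2 hx.le
        have := (abs_le.mp (hbnd t)).2
        rw [abs_of_nonpos ht0] at this
        linarith
      have h2 : ∫ t in (c*x)..x, (-t : ℝ) = -((x^2 - (c*x)^2)/2) := by
        rw [intervalIntegral.integral_neg, integral_id]
      have h3 : ∫ t in x..(c*x), (deriv g t - deriv g 0)
          = -∫ t in (c*x)..x, (deriv g t - deriv g 0) := (integral_symm _ _)
      rw [h3]
      rw [h2] at h1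
      nlinarith [h1]
  have := hftc ▸ hsplit
  nlinarith [hmain, this]

end WGaux

end Helpers

/-- `Γ = { g ∈ C_b(ℝ) ∩ C¹(ℝ) : g' is 1-Lipschitz }`. -/
def gammaC1 : Set (ℝ → ℝ) :=
  {g : ℝ → ℝ | (∃ C : ℝ, ∀ x, |g x| ≤ C) ∧ Differentiable ℝ g ∧ LipschitzWith 1 (deriv g)}

/-- For centered Gaussians `μ = N(0,σ₁²)`, `ν = N(0,σ₂²)` with `0 < σ₁ < σ₂`,
`W_Γ(μ − ν) = (σ₂² − σ₁²)/2`. -/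
theorem wGamma_gaussians
    (σ₁ σ₂ : ℝ) (h1 : 0 < σ₁) (h12 : σ₁ < σ₂) :
    wGammaF gammaC1 (gaussianReal 0 (Real.toNNReal (σ₁ ^ 2)))
        (gaussianReal 0 (Real.toNNReal (σ₂ ^ 2)))
      = (((σ₂ ^ 2 - σ₁ ^ 2) / 2 : ℝ) : EReal) := by
  have h2 : 0 < σ₂ := h1.trans h12
  set v₁ : ℝ≥0 := Real.toNNReal (σ₁ ^ 2) with hv₁def
  set v₂ : ℝ≥0 := Real.toNNReal (σ₂ ^ 2) with hv₂def
  have hv₁ : v₁ ≠ 0 := by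
    rw [hv₁def, ne_eq, Real.toNNReal_eq_zero, not_le]; positivity
  have hv₂ : v₂ ≠ 0 := by
    rw [hv₂def, ne_eq, Real.toNNReal_eq_zero, not_le]; positivity
  have hc₁ : ((v₁ : ℝ)) = σ₁ ^ 2 := Real.coe_toNNReal _ (sq_nonneg _)
  have hc₂ : ((v₂ : ℝ)) = σ₂ ^ 2 := Real.coe_toNNReal _ (sq_nonneg _)
  set c : ℝ := σ₂ / σ₁ with hcdef
  have hc1 : 1 ≤ c := (one_le_div h1).mpr h12.le
  have hc0 : 0 < c := by positivity
  -- upper bound for each admissible g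
  have upper : ∀ g ∈ gammaC1,
      (∫ x, g x ∂(gaussianReal 0 v₁)) - ∫ x, g x ∂(gaussianReal 0 v₂)
        ≤ (σ₂ ^ 2 - σ₁ ^ 2) / 2 := by
    rintro g ⟨hbd, hdiff, hlip⟩
    have hgc : Continuous g := hdiff.continuous
    have hmap : (gaussianReal 0 v₁).map (c * ·) = gaussianReal 0 v₂ := by
      rw [gaussianReal_map_const_mul c, mul_zero]
      congr 1
      apply NNReal.coe_injective
      rw [NNReal.coe_mul, hc₂, hc₁]
      show c ^ 2 * σ₁ ^ 2 = σ₂ ^ 2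
      rw [hcdef, div_pow]
      field_simp
    have hν : ∫ x, g x ∂(gaussianReal 0 v₂) = ∫ x, g (c * x) ∂(gaussianReal 0 v₁) := by
      rw [← hmap, integral_map (measurable_const_mul c).aemeasurable hgc.aestronglyMeasurable]
    have hint_g : Integrable g (gaussianReal 0 v₁) := WGaux.integrable_of_bounded hgc hbd
    have hint_gc : Integrable (fun x => g (c * x)) (gaussianReal 0 v₁) := by
      obtain ⟨C, hC⟩ := hbd
      exact WGaux.integrable_of_bounded (hgc.comp (continuous_const.mul continuous_id))
        ⟨C, fun x => hC _⟩
    have hint_id := WGaux.integrable_id_gauss v₁ hv₁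
    have hint_sq := WGaux.integrable_sq_gauss v₁ hv₁
    have hint_lin : Integrable (fun x => deriv g 0 * ((c - 1) * x)) (gaussianReal 0 v₁) :=
      (hint_id.const_mul (c - 1)).const_mul (deriv g 0)
    have hint_sub : Integrable (fun x => g x - g (c * x)) (gaussianReal 0 v₁) :=
      hint_g.sub hint_gc
    have hdiffeq : (∫ x, g x ∂(gaussianReal 0 v₁)) - ∫ x, g x ∂(gaussianReal 0 v₂)
        = ∫ x, (g x - g (c * x) + deriv g 0 * ((c - 1) * x)) ∂(gaussianReal 0 v₁) := by
      rw [hν, integral_add hint_sub hint_lin, integral_sub hint_g hint_gc,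
        integral_const_mul, integral_const_mul, WGaux.integral_id_gauss v₁ hv₁]
      ring
    rw [hdiffeq]
    have hle : ∫ x, (g x - g (c * x) + deriv g 0 * ((c - 1) * x)) ∂(gaussianReal 0 v₁)
        ≤ ∫ x, ((c ^ 2 - 1) / 2) * x ^ 2 ∂(gaussianReal 0 v₁) := by
      refine integral_mono (hint_sub.add hint_lin) (hint_sq.const_mul _)
        (fun x => ?_)
      exact (WGaux.key_pt g hdiff hlip c hc1 x).trans_eq (by ring)
    refine hle.trans ?_
    rw [integral_const_mul, WGaux.integral_sq_gauss v₁ hv₁, hc₁]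
    refine le_of_eq ?_
    rw [hcdef, div_pow]
    field_simp
  refine le_antisymm ?_ ?_
  · exact iSup₂_le fun g hg => EReal.coe_le_coe_iff.mpr (upper g hg)
  · -- lower bound via test functions x ↦ (cos(t x) - 1)/t²
    set D : ℝ → ℝ :=
      fun t => (Real.exp (-(t ^ 2 * σ₁ ^ 2 / 2)) - Real.exp (-(t ^ 2 * σ₂ ^ 2 / 2))) / t ^ 2
      with hDdef
    have hmemval : ∀ t : ℝ, 0 < t →
        ∃ g ∈ gammaC1,
          (∫ x, g x ∂(gaussianReal 0 v₁)) - ∫ x, g x ∂(gaussianReal 0 v₂) = D t := by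
      intro t ht
      have ht2 : (0:ℝ) < t ^ 2 := by positivity
      have htne : t ≠ 0 := ne_of_gt ht
      refine ⟨fun x => (Real.cos (t * x) - 1) / t ^ 2, ?_, ?_⟩
      · constructor
        · refine ⟨2 / t ^ 2, fun x => ?_⟩
          rw [abs_div, abs_of_pos ht2]
          have hnum : |Real.cos (t * x) - 1| ≤ 2 := by
            have hle1 := Real.cos_le_one (t * x)
            have hge1 := Real.neg_one_le_cos (t * x)
            rw [abs_le]; constructor <;> linarith
          gcongr
        · have hd1 : ∀ x : ℝ, HasDerivAt (fun x => (Real.cos (t * x) - 1) / t ^ 2)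
              (-Real.sin (t * x) / t) x := by
            intro x
            have h0 : HasDerivAt (fun x : ℝ => t * x) t x := by
              simpa using (hasDerivAt_id x).const_mul t
            have hcos := (Real.hasDerivAt_cos (t * x)).comp x h0
            have hfin := (hcos.sub_const 1).div_const (t ^ 2)
            rw [show -Real.sin (t * x) / t = -Real.sin (t * x) * t / t ^ 2 by
              rw [pow_two, mul_div_mul_right _ _ htne]]
            exact hfin
          have hderiv : deriv (fun x => (Real.cos (t * x) - 1) / t ^ 2)
              = fun x => -Real.sin (t * x) / t := funext fun x => (hd1 x).deriv
          have hdiff : Differentiable ℝ (fun x => (Real.cos (t * x) - 1) / t ^ 2) :=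
            fun x => (hd1 x).differentiableAt
          refine ⟨hdiff, ?_⟩
          rw [hderiv]
          have hd2 : ∀ x : ℝ, HasDerivAt (fun x => -Real.sin (t * x) / t)
              (-Real.cos (t * x)) x := by
            intro x
            have h0 : HasDerivAt (fun x : ℝ => t * x) t x := by
              simpa using (hasDerivAt_id x).const_mul t
            have hsin := (Real.hasDerivAt_sin (t * x)).comp x h0
            have hfin := hsin.neg.div_const t
            rw [show -Real.cos (t * x) = -(Real.cos (t * x) * t) / t by
              rw [neg_div, mul_div_assoc, div_self htne, mul_one]]
            exact hfin
          refine lipschitzWith_of_nnnorm_deriv_le (fun x => (hd2 x).differentiableAt)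
            (fun x => ?_)
          rw [(hd2 x).deriv, ← NNReal.coe_le_coe, coe_nnnorm, NNReal.coe_one,
            Real.norm_eq_abs, abs_neg]
          exact Real.abs_cos_le_one _
      · have hval : ∀ (v : ℝ≥0), v ≠ 0 →
            ∫ x, (Real.cos (t * x) - 1) / t ^ 2 ∂(gaussianReal 0 v)
              = (Real.exp (-(t ^ 2 * (v:ℝ) / 2)) - 1) / t ^ 2 := by
          intro v hv
          have hintcos : Integrable (fun x => Real.cos (t * x)) (gaussianReal 0 v) :=
            WGaux.integrable_of_bounded
              (Real.continuous_cos.comp (continuous_const.mul continuous_id))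
              ⟨1, fun x => Real.abs_cos_le_one _⟩
          rw [integral_div, integral_sub hintcos (integrable_const 1),
            WGaux.integral_cos_gauss v hv t, integral_const]
          simp
        rw [hval v₁ hv₁, hval v₂ hv₂, hc₁, hc₂, hDdef]
        ring
    have hD : Filter.Tendsto D (nhdsWithin 0 (Set.Ioi 0))
        (nhds ((σ₂ ^ 2 - σ₁ ^ 2) / 2)) := by
      set φ : ℝ → ℝ :=
        fun s => Real.exp (-(s * σ₁ ^ 2 / 2)) - Real.exp (-(s * σ₂ ^ 2 / 2)) with hφdef
      have hφ0 : φ 0 = 0 := by simp [hφdef]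
      have hder : HasDerivAt φ ((σ₂ ^ 2 - σ₁ ^ 2) / 2) 0 := by
        have H : ∀ K : ℝ, HasDerivAt (fun s : ℝ => Real.exp (-(s * K / 2))) (-(K/2)) 0 := by
          intro K
          have hin : HasDerivAt (fun s : ℝ => -(s * K / 2)) (-(K/2)) 0 := by
            have := (((hasDerivAt_id (0:ℝ)).mul_const K).div_const 2).neg
            rw [one_mul] at this
            exact this
          simpa using hin.exp
        have := (H (σ₁ ^ 2)).sub (H (σ₂ ^ 2))
        rw [show (σ₂ ^ 2 - σ₁ ^ 2) / 2 = -(σ₁ ^ 2 / 2) - -(σ₂ ^ 2 / 2) by ring]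
        exact this
      have hslope := hasDerivAt_iff_tendsto_slope.mp hder
      have hsq : Filter.Tendsto (fun t : ℝ => t ^ 2) (nhdsWithin 0 (Set.Ioi 0))
          (nhdsWithin 0 {(0:ℝ)}ᶜ) := by
        refine tendsto_nhdsWithin_of_tendsto_nhds_of_eventually_within _ ?_ ?_
        · simpa using ((continuous_pow 2).tendsto (0:ℝ)).mono_left nhdsWithin_le_nhds
        · filter_upwards [self_mem_nhdsWithin] with u hu
          simp only [Set.mem_compl_iff, Set.mem_singleton_iff]
          have : (0:ℝ) < u := hu
          positivity
      have hcomp := hslope.comp hsq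
      refine hcomp.congr' ?_
      filter_upwards [self_mem_nhdsWithin] with u hu
      have hu0 : (0:ℝ) < u := hu
      have hu2 : u ^ 2 ≠ 0 := by positivity
      show slope φ 0 (u ^ 2) = D u
      rw [slope_def_field, hφ0, hDdef, hφdef]
      simp only [sub_zero]
    have hcoeD : Filter.Tendsto (fun t => ((D t : ℝ) : EReal)) (nhdsWithin 0 (Set.Ioi 0))
        (nhds (((σ₂ ^ 2 - σ₁ ^ 2) / 2 : ℝ) : EReal)) := EReal.tendsto_coe.mpr hD
    refine le_of_tendsto hcoeD ?_
    filter_upwards [self_mem_nhdsWithin] with t ht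
    obtain ⟨g, hg, hgval⟩ := hmemval t ht
    rw [← hgval]
    exact le_iSup₂ (f := fun g (_ : g ∈ gammaC1) =>
      (((∫ x, g x ∂(gaussianReal 0 v₁)) - ∫ x, g x ∂(gaussianReal 0 v₂) : ℝ) : EReal)) g hg
end

section
/- Let μ = N(b₁, σ₁²) and ν = N(b₂, σ₂²) with |1/σ₁² − 1/σ₂²| ≤ 1, and Γ = { g ∈ C_b(ℝ) ∩ C¹(ℝ) : g' is 1-Lipschitz }. Then G_Γ(μ‖ν) = R(μ‖ν), the relative entropy between the two Gaussians, namely log(σ₂/σ₁) + (σ₁² + (b₁−b₂)²)/(2σ₂²) − 1/2. -/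
open MeasureTheory ProbabilityTheory Real

open Filter Topology
open scoped NNReal ENNReal

-- transfer lemmas
lemma gauss_transfer_integral {b : ℝ} {v : ℝ≥0} (hv : v ≠ 0) (f : ℝ → ℝ) :
    ∫ x, f x ∂(gaussianReal b v) = ∫ x, gaussianPDFReal b v x * f x := by
  rw [gaussianReal_of_var_ne_zero _ hv, gaussianPDF_def]
  have : (fun x => ENNReal.ofReal (gaussianPDFReal b v x))
      = fun x => ((Real.toNNReal (gaussianPDFReal b v x) : ℝ≥0) : ℝ≥0∞) := by
    funext x; simp [ENNReal.ofReal]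
  rw [this, integral_withDensity_eq_integral_smul
    ((measurable_gaussianPDFReal b v).real_toNNReal) f]
  congr 1; funext x
  simp [NNReal.smul_def, Real.coe_toNNReal _ (gaussianPDFReal_nonneg b v x)]

lemma gauss_transfer_integrable {b : ℝ} {v : ℝ≥0} (hv : v ≠ 0) {f : ℝ → ℝ}
    (hf : AEStronglyMeasurable f volume) :
    Integrable f (gaussianReal b v) ↔ Integrable (fun x => gaussianPDFReal b v x * f x) volume := by
  rw [gaussianReal_of_var_ne_zero _ hv, gaussianPDF_def]
  have : (fun x => ENNReal.ofReal (gaussianPDFReal b v x))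
      = fun x => ((Real.toNNReal (gaussianPDFReal b v x) : ℝ≥0) : ℝ≥0∞) := by
    funext x; simp [ENNReal.ofReal]
  rw [this, integrable_withDensity_iff_integrable_smul
    ((measurable_gaussianPDFReal b v).real_toNNReal)]
  constructor <;> intro h <;> refine h.congr (Filter.Eventually.of_forall fun x => ?_) <;>
    simp [NNReal.smul_def, Real.coe_toNNReal _ (gaussianPDFReal_nonneg b v x)]

lemma integral_mul_exp_neg_mul_sq_zero {b : ℝ} : ∫ x : ℝ, x * exp (-b*x^2) = 0 := by
  have h := MeasureTheory.integral_neg_eq_self (fun x : ℝ => x * exp (-b*x^2)) volume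
  simp only [neg_mul, neg_sq] at h
  have h2 : ∫ x : ℝ, -(x * exp (-b*x^2)) = ∫ x : ℝ, x * exp (-b*x^2) := by
    simpa [neg_mul] using h
  rw [integral_neg] at h2
  linarith

lemma tendsto_mul_exp_neg_mul_sq_atTop {b : ℝ} (hb : 0 < b) :
    Tendsto (fun x : ℝ => x * exp (-b*x^2)) atTop (𝓝 0) := by
  have h := rpow_mul_exp_neg_mul_sq_isLittleO_exp_neg hb 1
  have h0 : Tendsto (fun x : ℝ => exp (-(1/2) * x)) atTop (𝓝 0) := by
    have := Real.tendsto_exp_neg_atTop_nhds_zero.comp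
      (tendsto_id.atTop_div_const (by norm_num : (0:ℝ) < 2))
    refine this.congr fun x => ?_
    simp only [Function.comp_apply, id]
    congr 1; ring
  have h1 : Tendsto (fun x : ℝ => x ^ (1:ℝ) * exp (-b*x^2)) atTop (𝓝 0) :=
    h.trans_tendsto h0
  refine h1.congr' ?_
  filter_upwards [eventually_ge_atTop (0:ℝ)] with x hx
  rw [Real.rpow_one]

lemma integral_sq_mul_exp_neg_mul_sq {b : ℝ} (hb : 0 < b) :
    ∫ x : ℝ, x^2 * exp (-b*x^2) = Real.sqrt (π/b) / (2*b) := by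
  have hInt2 : Integrable (fun x : ℝ => x^2 * exp (-b*x^2)) := by
    have := integrable_rpow_mul_exp_neg_mul_sq hb (s := 2) (by norm_num)
    refine this.congr (Eventually.of_forall fun x => ?_)
    norm_num [Real.rpow_natCast]
  have hIntE : Integrable (fun x : ℝ => exp (-b*x^2)) := integrable_exp_neg_mul_sq hb
  -- antiderivative
  set F : ℝ → ℝ := fun x => -x * exp (-b*x^2) / (2*b) with hF
  set F' : ℝ → ℝ := fun x => x^2 * exp (-b*x^2) - exp (-b*x^2) / (2*b) with hF'
  have hderiv : ∀ x : ℝ, HasDerivAt F (F' x) x := by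
    intro x
    have h1 : HasDerivAt (fun x : ℝ => -b*x^2) (-b*(2*x)) x := by
      simpa using (hasDerivAt_pow 2 x).const_mul (-b)
    have h2 : HasDerivAt (fun x : ℝ => exp (-b*x^2)) (exp (-b*x^2) * (-b*(2*x))) x := h1.exp
    have h3 : HasDerivAt (fun x : ℝ => -x * exp (-b*x^2) / (2*b))
        (((-1) * exp (-b*x^2) + (-x) * (exp (-b*x^2) * (-b*(2*x)))) / (2*b)) x := by
      exact (((hasDerivAt_id x).neg.mul h2)).div_const (2*b)
    refine h3.congr_deriv ?_
    rw [hF']; field_simp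
    ring
  have hIntF' : Integrable F' := hInt2.sub (hIntE.div_const _)
  have htop : Tendsto F atTop (𝓝 0) := by
    have := (tendsto_mul_exp_neg_mul_sq_atTop hb).div_const (2*b)
    simpa [hF, neg_mul, neg_div] using this.neg
  have hbot : Tendsto F atBot (𝓝 0) := by
    have h1 : Tendsto (fun x : ℝ => (-x) * exp (-b*(-x)^2)) atBot (𝓝 0) :=
      (tendsto_mul_exp_neg_mul_sq_atTop hb).comp tendsto_neg_atBot_atTop
    have h2 := h1.div_const (2*b)
    rw [zero_div] at h2
    refine h2.congr fun x => ?_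
    simp [hF, neg_sq]
  have hIoi : ∫ x in Set.Ioi (0:ℝ), F' x = 0 - F 0 :=
    integral_Ioi_of_hasDerivAt_of_tendsto (hderiv 0).continuousAt.continuousWithinAt
      (fun x _ => hderiv x) hIntF'.integrableOn htop
  have hIic : ∫ x in Set.Iic (0:ℝ), F' x = F 0 - 0 :=
    integral_Iic_of_hasDerivAt_of_tendsto (hderiv 0).continuousAt.continuousWithinAt
      (fun x _ => hderiv x) hIntF'.integrableOn hbot
  have hsplit : ∫ x : ℝ, F' x = 0 := by
    rw [← intervalIntegral.integral_Iic_add_Ioi hIntF'.integrableOn hIntF'.integrableOn, hIoi, hIic]; ring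
  have hsub : ∫ x : ℝ, F' x = (∫ x : ℝ, x^2 * exp (-b*x^2)) - (∫ x : ℝ, exp (-b*x^2))/(2*b) := by
    rw [hF']
    rw [integral_sub hInt2 (hIntE.div_const _), integral_div]
  rw [hsplit, integral_gaussian] at hsub
  linarith

lemma integrable_exp_neg_quadratic {a : ℝ} (ha : 0 < a) (bb cc : ℝ) :
    Integrable (fun x : ℝ => exp (-a*x^2 + bb*x + cc)) := by
  have base := integrable_exp_neg_mul_sq ha
  have h := (base.comp_sub_right (bb/(2*a))).const_mul (exp (cc + bb^2/(4*a)))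
  refine h.congr (Eventually.of_forall fun x => ?_)
  simp only [← Real.exp_add]
  congr 1
  field_simp
  ring

lemma integrable_poly2_sub_mul_gaussianAux {m : ℝ} {β K : ℝ} (hβ : 0 < β) (a c d : ℝ) :
    Integrable (fun y : ℝ => (a*(y+m)^2 + c*(y+m) + d) * (K * exp (-β*y^2))) := by
  have I2 : Integrable (fun x : ℝ => x^2 * exp (-β*x^2)) := by
    have := integrable_rpow_mul_exp_neg_mul_sq hβ (s := 2) (by norm_num)
    refine this.congr (Eventually.of_forall fun x => ?_)
    norm_num [Real.rpow_natCast]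
  have I1 : Integrable (fun x : ℝ => x * exp (-β*x^2)) := integrable_mul_exp_neg_mul_sq hβ
  have I0 : Integrable (fun x : ℝ => exp (-β*x^2)) := integrable_exp_neg_mul_sq hβ
  have := (((I2.const_mul K).const_mul a).add
    (((I1.const_mul K).const_mul (2*a*m+c)).add ((I0.const_mul K).const_mul (a*m^2+c*m+d))))
  refine this.congr (Eventually.of_forall fun y => ?_)
  simp only [Pi.add_apply]
  ring

lemma gaussianPDFReal_eq {m : ℝ} {v : ℝ≥0} (hv : 0 < (v:ℝ)) (x : ℝ) :
    gaussianPDFReal m v x = (Real.sqrt (2 * π * v))⁻¹ * exp (-(1/(2*(v:ℝ)))*(x-m)^2) := by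
  rw [gaussianPDFReal]
  congr 1
  congr 1
  field_simp

lemma integrable_poly2_mul_gaussianPDF (m : ℝ) {v : ℝ≥0} (hv : 0 < (v:ℝ)) (a c d : ℝ) :
    Integrable (fun x : ℝ => (a*x^2 + c*x + d) * gaussianPDFReal m v x) := by
  have hβ : 0 < 1/(2*(v:ℝ)) := by positivity
  have h := (integrable_poly2_sub_mul_gaussianAux (m := m) (K := (Real.sqrt (2 * π * v))⁻¹)
    hβ a c d).comp_sub_right m
  refine h.congr (Eventually.of_forall fun x => ?_)
  simp only [sub_add_cancel]
  rw [gaussianPDFReal_eq hv]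

lemma integral_gauss_centered_0 {v : ℝ≥0} (hv : 0 < (v:ℝ)) :
    ∫ y : ℝ, (Real.sqrt (2 * π * v))⁻¹ * exp (-(1/(2*(v:ℝ)))*y^2) = 1 := by
  have hveq : (fun y : ℝ => (Real.sqrt (2 * π * v))⁻¹ * exp (-(1/(2*(v:ℝ)))*y^2))
      = gaussianPDFReal 0 v := by
    funext y
    rw [gaussianPDFReal_eq hv]
    ring_nf
  rw [hveq]
  exact integral_gaussianPDFReal_eq_one 0 (fun h => hv.ne' (by simp [h]))

lemma sqrt_const_eq {v : ℝ≥0} (hv : 0 < (v:ℝ)) :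
    (Real.sqrt (2 * π * v))⁻¹ * Real.sqrt (π/(1/(2*(v:ℝ)))) = 1 := by
  rw [show π/(1/(2*(v:ℝ))) = 2 * π * v by field_simp]
  rw [inv_mul_cancel₀]
  positivity

lemma integral_poly2_mul_gaussianPDF (m : ℝ) {v : ℝ≥0} (hv : 0 < (v:ℝ)) (a c d : ℝ) :
    ∫ x : ℝ, (a*x^2 + c*x + d) * gaussianPDFReal m v x = a*((v:ℝ) + m^2) + c*m + d := by
  set β : ℝ := 1/(2*(v:ℝ)) with hβdef
  have hβ : 0 < β := by positivity
  set K : ℝ := (Real.sqrt (2 * π * v))⁻¹ with hK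
  have hsub : ∫ x : ℝ, (a*x^2 + c*x + d) * gaussianPDFReal m v x
      = ∫ y : ℝ, (a*(y+m)^2 + c*(y+m) + d) * (K * exp (-β*y^2)) := by
    rw [← MeasureTheory.integral_add_right_eq_self
      (fun x => (a*x^2 + c*x + d) * gaussianPDFReal m v x) m]
    congr 1; funext y
    rw [gaussianPDFReal_eq hv]
    simp only [add_sub_cancel_right]
    rfl
  rw [hsub]
  have I2 : Integrable (fun x : ℝ => x^2 * exp (-β*x^2)) := by
    have := integrable_rpow_mul_exp_neg_mul_sq hβ (s := 2) (by norm_num)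
    refine this.congr (Eventually.of_forall fun x => ?_)
    norm_num [Real.rpow_natCast]
  have I1 : Integrable (fun x : ℝ => x * exp (-β*x^2)) := integrable_mul_exp_neg_mul_sq hβ
  have I0 : Integrable (fun x : ℝ => exp (-β*x^2)) := integrable_exp_neg_mul_sq hβ
  have heq : (fun y : ℝ => (a*(y+m)^2 + c*(y+m) + d) * (K * exp (-β*y^2)))
      = fun y : ℝ => (a*K) * (y^2 * exp (-β*y^2)) + ((2*a*m+c)*K) * (y * exp (-β*y^2))
        + ((a*m^2+c*m+d)*K) * exp (-β*y^2) := by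
    funext y; ring
  rw [heq]
  have IA : Integrable (fun y : ℝ => a*K*(y^2*exp (-β*y^2)) + (2*a*m+c)*K*(y*exp (-β*y^2))) :=
    (I2.const_mul _).add (I1.const_mul _)
  have IB : Integrable (fun y : ℝ => (a*m^2+c*m+d)*K*exp (-β*y^2)) := I0.const_mul _
  rw [integral_add IA IB,
    integral_add (I2.const_mul (a*K)) (I1.const_mul ((2*a*m+c)*K)),
    integral_const_mul, integral_const_mul, integral_const_mul,
    integral_mul_exp_neg_mul_sq_zero, integral_sq_mul_exp_neg_mul_sq hβ]
  have h0 : ∫ y : ℝ, exp (-β*y^2) = Real.sqrt (π/β) := integral_gaussian β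
  rw [h0]
  have h1 : K * Real.sqrt (π/β) = 1 := sqrt_const_eq hv
  have h2 : Real.sqrt (π/β) / (2*β) = Real.sqrt (π/β) * (v:ℝ) := by
    rw [hβdef]; field_simp
  rw [h2]
  have : a * K * (Real.sqrt (π/β) * (v:ℝ)) = a * (v:ℝ) * (K * Real.sqrt (π/β)) := by ring
  rw [this, h1]
  have : (a*m^2+c*m+d) * K * Real.sqrt (π/β) = (a*m^2+c*m+d) * (K * Real.sqrt (π/β)) := by ring
  rw [this, h1]
  ring

section
variable {b₁ b₂ σ₁ σ₂ : ℝ}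

lemma key_pq (h1 : 0 < σ₁) (h2 : 0 < σ₂) (x : ℝ) :
    exp ((1/(2*σ₂^2) - 1/(2*σ₁^2))*x^2 + (b₁/σ₁^2 - b₂/σ₂^2)*x
      + (Real.log (σ₂/σ₁) + b₂^2/(2*σ₂^2) - b₁^2/(2*σ₁^2)))
      * gaussianPDFReal b₂ (σ₂^2).toNNReal x = gaussianPDFReal b₁ (σ₁^2).toNNReal x := by
  have hc1 : (((σ₁^2).toNNReal : ℝ≥0) : ℝ) = σ₁^2 := Real.coe_toNNReal _ (sq_nonneg σ₁)
  have hc2 : (((σ₂^2).toNNReal : ℝ≥0) : ℝ) = σ₂^2 := Real.coe_toNNReal _ (sq_nonneg σ₂)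
  simp only [gaussianPDFReal, hc1, hc2]
  have s1 : Real.sqrt (2*π*σ₁^2) = Real.sqrt (2*π) * σ₁ := by
    rw [Real.sqrt_mul (by positivity), Real.sqrt_sq h1.le]
  have s2 : Real.sqrt (2*π*σ₂^2) = Real.sqrt (2*π) * σ₂ := by
    rw [Real.sqrt_mul (by positivity), Real.sqrt_sq h2.le]
  rw [s1, s2, mul_comm, mul_assoc, ← Real.exp_add]
  have hexp : -(x - b₂)^2/(2*(σ₂^2)) + ((1/(2*σ₂^2) - 1/(2*σ₁^2))*x^2 + (b₁/σ₁^2 - b₂/σ₂^2)*x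
      + (Real.log (σ₂/σ₁) + b₂^2/(2*σ₂^2) - b₁^2/(2*σ₁^2)))
      = Real.log (σ₂/σ₁) + (-(x - b₁)^2/(2*(σ₁^2))) := by
    field_simp
    ring
  rw [hexp, Real.exp_add, Real.exp_log (div_pos h2 h1)]
  have hsq : Real.sqrt (2*π) ≠ 0 := by positivity
  field_simp

lemma key_qp (h1 : 0 < σ₁) (h2 : 0 < σ₂) (x : ℝ) :
    exp (-((1/(2*σ₂^2) - 1/(2*σ₁^2))*x^2 + (b₁/σ₁^2 - b₂/σ₂^2)*x
      + (Real.log (σ₂/σ₁) + b₂^2/(2*σ₂^2) - b₁^2/(2*σ₁^2))))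
      * gaussianPDFReal b₁ (σ₁^2).toNNReal x = gaussianPDFReal b₂ (σ₂^2).toNNReal x := by
  rw [← key_pq h1 h2 x, ← mul_assoc, ← Real.exp_add, neg_add_cancel, Real.exp_zero, one_mul]

end

section
variable {b₁ b₂ σ₁ σ₂ : ℝ}

-- the optimal function as a quadratic
noncomputable def gstarF (b₁ b₂ σ₁ σ₂ : ℝ) : ℝ → ℝ := fun x =>
  (1/(2*σ₂^2) - 1/(2*σ₁^2))*x^2 + (b₁/σ₁^2 - b₂/σ₂^2)*x
      + (Real.log (σ₂/σ₁) + b₂^2/(2*σ₂^2) - b₁^2/(2*σ₁^2))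

lemma toNNReal_sq_ne_zero (h : 0 < σ₁) : (σ₁^2).toNNReal ≠ 0 := by
  rw [Ne, Real.toNNReal_eq_zero, not_le]
  positivity

lemma coe_toNNReal_sq (σ : ℝ) : (((σ^2).toNNReal : ℝ≥0) : ℝ) = σ^2 :=
  Real.coe_toNNReal _ (sq_nonneg σ)

lemma integrable_gstar (h1 : 0 < σ₁) (h2 : 0 < σ₂) :
    Integrable (gstarF b₁ b₂ σ₁ σ₂) (gaussianReal b₁ (σ₁^2).toNNReal) := by
  have hv : (0:ℝ) < (((σ₁^2).toNNReal : ℝ≥0) : ℝ) := by rw [coe_toNNReal_sq]; positivity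
  have hcont : Continuous (gstarF b₁ b₂ σ₁ σ₂) := by unfold gstarF; fun_prop
  rw [gauss_transfer_integrable (toNNReal_sq_ne_zero h1) hcont.aestronglyMeasurable]
  refine (integrable_poly2_mul_gaussianPDF b₁ hv (1/(2*σ₂^2) - 1/(2*σ₁^2))
    (b₁/σ₁^2 - b₂/σ₂^2) (Real.log (σ₂/σ₁) + b₂^2/(2*σ₂^2) - b₁^2/(2*σ₁^2))).congr
    (Eventually.of_forall fun x => ?_)
  unfold gstarF
  ring

lemma integral_gstar (h1 : 0 < σ₁) (h2 : 0 < σ₂) :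
    ∫ x, gstarF b₁ b₂ σ₁ σ₂ x ∂(gaussianReal b₁ (σ₁^2).toNNReal)
      = Real.log (σ₂ / σ₁) + (σ₁ ^ 2 + (b₁ - b₂) ^ 2) / (2 * σ₂ ^ 2) - 1 / 2 := by
  have hv : (0:ℝ) < (((σ₁^2).toNNReal : ℝ≥0) : ℝ) := by rw [coe_toNNReal_sq]; positivity
  rw [gauss_transfer_integral (toNNReal_sq_ne_zero h1)]
  have : ∫ x, gaussianPDFReal b₁ (σ₁^2).toNNReal x * gstarF b₁ b₂ σ₁ σ₂ x
      = ∫ x, (gstarF b₁ b₂ σ₁ σ₂ x) * gaussianPDFReal b₁ (σ₁^2).toNNReal x := by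
    congr 1; funext x; rw [mul_comm]
  rw [this]
  unfold gstarF
  rw [integral_poly2_mul_gaussianPDF b₁ hv, coe_toNNReal_sq]
  have e1 : Real.log (σ₂/σ₁) + b₂^2/(2*σ₂^2) - b₁^2/(2*σ₁^2)
      = Real.log (σ₂/σ₁) + (b₂^2/(2*σ₂^2) - b₁^2/(2*σ₁^2)) := by ring
  field_simp
  ring

lemma upper_bound (h1 : 0 < σ₁) (h2 : 0 < σ₂) (g : ℝ → ℝ) (hg : g ∈ gammaC1) :
    (∫ x, g x ∂(gaussianReal b₁ (σ₁^2).toNNReal))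
      - Real.log (∫ x, exp (g x) ∂(gaussianReal b₂ (σ₂^2).toNNReal))
      ≤ Real.log (σ₂ / σ₁) + (σ₁ ^ 2 + (b₁ - b₂) ^ 2) / (2 * σ₂ ^ 2) - 1 / 2 := by
  obtain ⟨⟨C, hC⟩, hdiff, -⟩ := hg
  have hgcont : Continuous g := hdiff.continuous
  set μ := gaussianReal b₁ (σ₁^2).toNNReal with hμ
  set ν := gaussianReal b₂ (σ₂^2).toNNReal with hν
  set gs := gstarF b₁ b₂ σ₁ σ₂ with hgs
  have hgscont : Continuous gs := by unfold gstarF at hgs; rw [hgs]; fun_prop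
  have hIg : Integrable g μ := by
    refine Integrable.mono' (integrable_const C) hgcont.aestronglyMeasurable ?_
    exact Eventually.of_forall fun x => by rw [Real.norm_eq_abs]; exact hC x
  have hIeg : Integrable (fun x => exp (g x)) ν := by
    refine Integrable.mono' (integrable_const (exp C))
      (Real.continuous_exp.comp hgcont).aestronglyMeasurable ?_
    refine Eventually.of_forall fun x => ?_
    rw [Real.norm_eq_abs, abs_of_pos (exp_pos _)]
    exact exp_le_exp.mpr ((abs_le.1 (hC x)).2)
  have hIpos : 0 < ∫ x, exp (g x) ∂ν := by
    have hmono := integral_mono (μ := ν) (integrable_const (exp (-C))) hIeg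
      (fun x => exp_le_exp.mpr (abs_le.1 (hC x)).1)
    rw [integral_const] at hmono
    simp only [measure_univ, probReal_univ, ENNReal.toReal_one, smul_eq_mul, one_mul] at hmono
    exact lt_of_lt_of_le (exp_pos _) hmono
  have hIgstar : Integrable gs μ := integrable_gstar h1 h2
  have hIexpneg : Integrable (fun x => exp (-gs x)) μ := by
    rw [hμ, gauss_transfer_integrable (toNNReal_sq_ne_zero h1)
      (show AEStronglyMeasurable (fun x => exp (-gs x)) volume from
        (Real.continuous_exp.comp hgscont.neg).aestronglyMeasurable)]
    have : (fun x => gaussianPDFReal b₁ (σ₁^2).toNNReal x * exp (-gs x))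
        = gaussianPDFReal b₂ (σ₂^2).toNNReal := by
      funext x; rw [mul_comm]; exact key_qp h1 h2 x
    rw [this]
    exact integrable_gaussianPDFReal b₂ _
  have hIexpsub : Integrable (fun x => exp (g x - gs x)) μ := by
    refine Integrable.mono' (hIexpneg.const_mul (exp C))
      (Real.continuous_exp.comp (hgcont.sub hgscont)).aestronglyMeasurable ?_
    refine Eventually.of_forall fun x => ?_
    rw [Real.norm_eq_abs, abs_of_pos (exp_pos _), sub_eq_add_neg, Real.exp_add]
    exact mul_le_mul_of_nonneg_right (exp_le_exp.mpr ((abs_le.1 (hC x)).2)) (exp_pos _).le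
  have hkey : ∫ x, exp (g x - gs x) ∂μ = ∫ x, exp (g x) ∂ν := by
    rw [hμ, hν, gauss_transfer_integral (toNNReal_sq_ne_zero h1),
      gauss_transfer_integral (toNNReal_sq_ne_zero h2)]
    congr 1; funext x
    have hqp : exp (-gs x) * gaussianPDFReal b₁ (σ₁^2).toNNReal x
        = gaussianPDFReal b₂ (σ₂^2).toNNReal x := key_qp h1 h2 x
    rw [sub_eq_add_neg, Real.exp_add, ← hqp]
    ring
  set I := ∫ x, exp (g x) ∂ν with hI
  have hpt : ∀ x, g x - gs x - Real.log I ≤ exp (g x - gs x)/I - 1 := by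
    intro x
    have h := Real.add_one_le_exp (g x - gs x - Real.log I)
    rw [Real.exp_sub, Real.exp_log hIpos] at h
    linarith
  have hIsub : Integrable (fun x => g x - gs x) μ := hIg.sub hIgstar
  have hIL : Integrable (fun x => g x - gs x - Real.log I) μ :=
    hIsub.sub (integrable_const _)
  have hIdiv : Integrable (fun x => exp (g x - gs x)/I) μ := hIexpsub.div_const I
  have hIR : Integrable (fun x => exp (g x - gs x)/I - 1) μ := hIdiv.sub (integrable_const 1)
  have hMono := integral_mono hIL hIR hpt
  rw [integral_sub hIsub (integrable_const _), integral_sub hIg hIgstar,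
    integral_sub hIdiv (integrable_const 1), integral_div, hkey,
    integral_const, integral_const] at hMono
  simp only [measure_univ, probReal_univ, ENNReal.toReal_one, smul_eq_mul, one_mul,
    div_self hIpos.ne'] at hMono
  have hR := integral_gstar (b₁ := b₁) (b₂ := b₂) h1 h2
  rw [← hgs, ← hμ] at hR
  rw [← hR]
  linarith

end

-- elementary bounds
lemma bnd1 {u : ℝ} (hu : 0 ≤ u) : |(2-4*u)*exp (-u)| ≤ 2 := by
  rw [abs_mul, abs_of_pos (exp_pos _), Real.exp_neg, inv_eq_one_div, mul_one_div,
    div_le_iff₀ (exp_pos u)]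
  have h2 := Real.add_one_le_exp (u/2)
  have hsq : exp (u/2) * exp (u/2) = exp u := by rw [← Real.exp_add]; ring_nf
  have hp := Real.exp_pos (u/2)
  rw [abs_le]
  constructor
  · nlinarith [sq_nonneg (u-2)]
  · nlinarith [Real.one_le_exp hu]

lemma bnd2 (w : ℝ) : |(w^3-3*w)*exp (-w^2/2)| ≤ 11 := by
  rw [abs_mul, abs_of_pos (exp_pos _)]
  have he : exp (-w^2/2) = (exp (w^2/2))⁻¹ := by
    rw [← Real.exp_neg]; ring_nf
  rw [he, inv_eq_one_div, mul_one_div, div_le_iff₀ (exp_pos _)]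
  have h2 := Real.add_one_le_exp (w^2/4)
  have hsq : exp (w^2/4) * exp (w^2/4) = exp (w^2/2) := by rw [← Real.exp_add]; ring_nf
  have hp := Real.exp_pos (w^2/4)
  have hw : 0 ≤ w^2/4 := by positivity
  rw [abs_le]
  constructor
  · nlinarith [sq_nonneg (w^2-w), sq_nonneg (w+1), sq_nonneg (w-1), sq_nonneg w,
      sq_nonneg (w^2-4), sq_nonneg (w^2+w), sq_nonneg (w^2-2*w), sq_nonneg (w^2+2*w)]
  · nlinarith [sq_nonneg (w^2-w), sq_nonneg (w+1), sq_nonneg (w-1), sq_nonneg w,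
      sq_nonneg (w^2-4), sq_nonneg (w^2+w), sq_nonneg (w^2-2*w), sq_nonneg (w^2+2*w)]

lemma bnd3 (w : ℝ) : |w| * exp (-w^2/2) ≤ 1 := by
  have he : exp (-w^2/2) = (exp (w^2/2))⁻¹ := by
    rw [← Real.exp_neg]; ring_nf
  rw [he, inv_eq_one_div, mul_one_div, div_le_one (exp_pos _)]
  have h2 := Real.add_one_le_exp (w^2/2)
  rcases abs_cases w with ⟨h, -⟩ | ⟨h, -⟩ <;> rw [h] <;> nlinarith [sq_nonneg (w-1), sq_nonneg (w+1)]

lemma one_sub_exp_le {u : ℝ} : 1 - exp (-u) ≤ u := by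
  have := Real.add_one_le_exp (-u); linarith

section
variable {s : ℝ} (hs : 0 < s)

-- derivatives
lemma hd_exp1 (x : ℝ) : HasDerivAt (fun x : ℝ => exp (-(x/s)^2)) 
    (exp (-(x/s)^2) * -(2*(x/s)*(1/s))) x := by
  exact (((hasDerivAt_id x).div_const s).pow 2).neg.exp.congr_deriv
    (by simp only [id_eq, Pi.pow_apply, Pi.neg_apply]; ring)

lemma hd_exp2 (x : ℝ) : HasDerivAt (fun x : ℝ => exp (-(x/s)^2/2))
    (exp (-(x/s)^2/2) * -((x/s)*(1/s))) x := by
  exact ((((hasDerivAt_id x).div_const s).pow 2).neg.div_const 2).exp.congr_deriv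
    (by simp only [id_eq, Pi.pow_apply, Pi.neg_apply]; ring)

include hs in
lemma hdA (x : ℝ) : HasDerivAt (fun x : ℝ => s^2*(1 - exp (-(x/s)^2)))
    (2*x*exp (-(x/s)^2)) x := by
  have h := ((hasDerivAt_const x (1:ℝ)).sub (hd_exp1 (s := s) x)).const_mul (s^2)
  refine h.congr_deriv ?_
  field_simp
  ring

lemma hdB (x : ℝ) : HasDerivAt (fun x : ℝ => x * exp (-(x/s)^2/2))
    ((1-(x/s)^2) * exp (-(x/s)^2/2)) x := by
  have h := (hasDerivAt_id x).mul (hd_exp2 (s := s) x)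
  refine h.congr_deriv ?_
  simp only [id_eq]
  field_simp
  ring

lemma hdA' (x : ℝ) : HasDerivAt (fun x : ℝ => 2*x*exp (-(x/s)^2))
    ((2-4*(x/s)^2)*exp (-(x/s)^2)) x := by
  have h := ((hasDerivAt_id x).const_mul (2:ℝ)).mul (hd_exp1 (s := s) x)
  refine h.congr_deriv ?_
  simp only [id_eq]
  field_simp
  ring

lemma hdB' (x : ℝ) : HasDerivAt (fun x : ℝ => (1-(x/s)^2)*exp (-(x/s)^2/2))
    ((1/s)*(((x/s)^3-3*(x/s))*exp (-(x/s)^2/2))) x := by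
  have h := (((hasDerivAt_const x (1:ℝ)).sub (((hasDerivAt_id x).div_const s).pow 2)).mul
    (hd_exp2 (s := s) x))
  refine h.congr_deriv ?_
  simp only [id_eq, Pi.sub_apply, Pi.pow_apply]
  by_cases hs0 : s = 0
  · subst hs0; simp
  norm_num
  field_simp
  ring

include hs in
lemma hdG (c A B C : ℝ) (x : ℝ) :
    HasDerivAt (fun x : ℝ => c*(A*(s^2*(1 - exp (-(x/s)^2))) + B*(x*exp (-(x/s)^2/2)) + C))
      (c*(A*(2*x*exp (-(x/s)^2)) + B*((1-(x/s)^2)*exp (-(x/s)^2/2)))) x := by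
  have h := ((((hdA hs x).const_mul A).add ((hdB (s := s) x).const_mul B)).add
    (hasDerivAt_const x C)).const_mul c
  refine h.congr_deriv ?_
  ring

lemma hdG' (c A B C : ℝ) (x : ℝ) :
    HasDerivAt (fun x : ℝ => c*(A*(2*x*exp (-(x/s)^2)) + B*((1-(x/s)^2)*exp (-(x/s)^2/2))))
      (c*(A*((2-4*(x/s)^2)*exp (-(x/s)^2)) + B*((1/s)*(((x/s)^3-3*(x/s))*exp (-(x/s)^2/2))))) x := by
  have h := (((hdA' (s := s) x).const_mul A).add ((hdB' (s := s) x).const_mul B)).const_mul c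
  refine h.congr_deriv ?_
  ring

include hs in
lemma mem_gammaC1_seq (c A B C : ℝ) (hc : 0 ≤ c) (hc1 : c ≤ 1)
    (hbound : c*(2*|A| + 11*|B|/s) ≤ 1) :
    (fun x : ℝ => c*(A*(s^2*(1 - exp (-(x/s)^2))) + B*(x*exp (-(x/s)^2/2)) + C)) ∈ gammaC1 := by
  refine ⟨⟨c*(|A| * s^2 + |B| * s + |C|), fun x => ?_⟩,
    fun x => (hdG hs c A B C x).differentiableAt, ?_⟩
  · rw [abs_mul, abs_of_nonneg hc]
    refine mul_le_mul_of_nonneg_left ?_ hc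
    refine (abs_add_le _ _).trans (add_le_add ((abs_add_le _ _).trans (add_le_add ?_ ?_)) le_rfl)
    · rw [abs_mul]
      refine mul_le_mul_of_nonneg_left ?_ (abs_nonneg A)
      have h1 : exp (-(x/s)^2) ≤ 1 := Real.exp_le_one_iff.mpr (neg_nonpos.mpr (sq_nonneg _))
      have hep := Real.exp_pos (-(x/s)^2)
      have h0 : (0:ℝ) ≤ 1 - exp (-(x/s)^2) := by linarith
      rw [abs_mul, abs_of_nonneg (sq_nonneg s), abs_of_nonneg h0]
      calc s^2 * (1 - exp (-(x/s)^2)) ≤ s^2 * 1 :=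
            mul_le_mul_of_nonneg_left (by linarith) (sq_nonneg s)
        _ = s^2 := mul_one _
    · rw [abs_mul]
      refine mul_le_mul_of_nonneg_left ?_ (abs_nonneg B)
      have heq : |x * exp (-(x/s)^2/2)| = s * (|x/s| * exp (-(x/s)^2/2)) := by
        rw [abs_mul, abs_of_pos (exp_pos _), abs_div, abs_of_pos hs]
        field_simp
      rw [heq]
      calc s * (|x/s| * exp (-(x/s)^2/2)) ≤ s * 1 :=
            mul_le_mul_of_nonneg_left (bnd3 (x/s)) hs.le
        _ = s := mul_one s
  · have hderiv : deriv (fun x : ℝ => c*(A*(s^2*(1 - exp (-(x/s)^2))) + B*(x*exp (-(x/s)^2/2)) + C))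
        = fun x => c*(A*(2*x*exp (-(x/s)^2)) + B*((1-(x/s)^2)*exp (-(x/s)^2/2))) := by
      funext x; exact (hdG hs c A B C x).deriv
    rw [hderiv]
    refine lipschitzWith_of_nnnorm_deriv_le (fun x => (hdG' (s := s) c A B C x).differentiableAt)
      (fun x => ?_)
    rw [show deriv (fun x : ℝ => c*(A*(2*x*exp (-(x/s)^2)) + B*((1-(x/s)^2)*exp (-(x/s)^2/2)))) x
      = c*(A*((2-4*(x/s)^2)*exp (-(x/s)^2)) + B*((1/s)*(((x/s)^3-3*(x/s))*exp (-(x/s)^2/2))))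
      from (hdG' (s := s) c A B C x).deriv]
    rw [← NNReal.coe_le_coe, coe_nnnorm, NNReal.coe_one, Real.norm_eq_abs]
    have h1 : |(2-4*(x/s)^2)*exp (-(x/s)^2)| ≤ 2 := by
      have : -(x/s)^2 = -((x/s)^2) := by ring
      rw [this]
      exact bnd1 (sq_nonneg (x/s))
    have h2 : |((x/s)^3-3*(x/s))*exp (-(x/s)^2/2)| ≤ 11 := bnd2 (x/s)
    calc |c*(A*((2-4*(x/s)^2)*exp (-(x/s)^2)) + B*((1/s)*(((x/s)^3-3*(x/s))*exp (-(x/s)^2/2))))|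
        = c * |A*((2-4*(x/s)^2)*exp (-(x/s)^2)) + B*((1/s)*(((x/s)^3-3*(x/s))*exp (-(x/s)^2/2)))| := by
          rw [abs_mul, abs_of_nonneg hc]
      _ ≤ c * (|A| * 2 + |B| * (11/s)) := by
          refine mul_le_mul_of_nonneg_left ((abs_add_le _ _).trans (add_le_add ?_ ?_)) hc
          · rw [abs_mul]
            exact mul_le_mul_of_nonneg_left h1 (abs_nonneg A)
          · rw [abs_mul, abs_mul, abs_of_pos (one_div_pos.mpr hs)]
            rw [← mul_assoc]
            have : |B| * (1/s) * |((x/s)^3-3*(x/s))*exp (-(x/s)^2/2)| ≤ |B| * (1/s) * 11 :=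
              mul_le_mul_of_nonneg_left h2 (by positivity)
            calc |B| * (1/s) * |((x/s)^3-3*(x/s))*exp (-(x/s)^2/2)| ≤ |B| * (1/s) * 11 := this
              _ = |B| * (11/s) := by ring
      _ ≤ 1 := by
          have heq2 : c * (|A| * 2 + |B| * (11/s)) = c*(2*|A| + 11*|B|/s) := by ring
          rw [heq2]; exact hbound

end

-- NEW MATERIAL STARTS HERE
lemma aS_nonneg {s : ℝ} (x : ℝ) : 0 ≤ s^2*(1 - exp (-(x/s)^2)) := by
  have h1 : exp (-(x/s)^2) ≤ 1 := Real.exp_le_one_iff.mpr (neg_nonpos.mpr (sq_nonneg _))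
  have := sq_nonneg s
  nlinarith

lemma aS_le_sq {s : ℝ} (hs : 0 < s) (x : ℝ) : s^2*(1 - exp (-(x/s)^2)) ≤ x^2 := by
  have h := Real.add_one_le_exp (-(-(x/s)^2))
  have h2 : 1 - exp (-(x/s)^2) ≤ (x/s)^2 := by
    have hp := Real.exp_pos (-(x/s)^2)
    have hinv : exp (-(-(x/s)^2)) = (exp (-(x/s)^2))⁻¹ := by
      rw [← Real.exp_neg]
    rw [hinv] at h
    have := Real.add_one_le_exp (-(x/s)^2)
    linarith
  have heq : s^2*(x/s)^2 = x^2 := by field_simp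
  nlinarith [sq_nonneg s]

lemma bS_abs_le {s : ℝ} (x : ℝ) : |x*exp (-(x/s)^2/2)| ≤ |x| := by
  rw [abs_mul, abs_of_pos (exp_pos _)]
  have h1 : exp (-(x/s)^2/2) ≤ 1 :=
    Real.exp_le_one_iff.mpr (by nlinarith [sq_nonneg (x/s)])
  nlinarith [abs_nonneg x, Real.exp_pos (-(x/s)^2/2)]

lemma gseq_abs_le {s c A B C : ℝ} (hs : 0 < s) (hc : 0 ≤ c) (hc1 : c ≤ 1) (x : ℝ) :
    |c*(A*(s^2*(1 - exp (-(x/s)^2))) + B*(x*exp (-(x/s)^2/2)) + C)|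
      ≤ |A| * x^2 + |B| * |x| + |C| := by
  have haS : |s^2*(1 - exp (-(x/s)^2))| ≤ x^2 := by
    rw [abs_of_nonneg (aS_nonneg x)]; exact aS_le_sq hs x
  have hbS := bS_abs_le (s := s) x
  have htr : |A*(s^2*(1 - exp (-(x/s)^2))) + B*(x*exp (-(x/s)^2/2)) + C|
      ≤ |A| * x^2 + |B| * |x| + |C| := by
    refine (abs_add_le _ _).trans (add_le_add ((abs_add_le _ _).trans (add_le_add ?_ ?_)) le_rfl)
    · rw [abs_mul]; exact mul_le_mul_of_nonneg_left haS (abs_nonneg A)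
    · rw [abs_mul]; exact mul_le_mul_of_nonneg_left hbS (abs_nonneg B)
  calc |c*(A*(s^2*(1 - exp (-(x/s)^2))) + B*(x*exp (-(x/s)^2/2)) + C)|
      = c * |A*(s^2*(1 - exp (-(x/s)^2))) + B*(x*exp (-(x/s)^2/2)) + C| := by
        rw [abs_mul, abs_of_nonneg hc]
    _ ≤ 1 * (|A| * x^2 + |B| * |x| + |C|) := by
        refine mul_le_mul hc1 htr (abs_nonneg _) zero_le_one
    _ = |A| * x^2 + |B| * |x| + |C| := one_mul _

lemma gseq_le_upper {s c A B C : ℝ} (hs : 0 < s) (hc : 0 ≤ c) (hc1 : c ≤ 1) (x : ℝ) :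
    c*(A*(s^2*(1 - exp (-(x/s)^2))) + B*(x*exp (-(x/s)^2/2)) + C)
      ≤ max A 0 * x^2 + |B| * |x| + |C| := by
  have hA : A*(s^2*(1 - exp (-(x/s)^2))) ≤ max A 0 * x^2 := by
    rcases le_or_gt A 0 with hA0 | hA0
    · have : A*(s^2*(1 - exp (-(x/s)^2))) ≤ 0 := mul_nonpos_of_nonpos_of_nonneg hA0 (aS_nonneg x)
      refine this.trans (mul_nonneg (le_max_right A 0) (sq_nonneg x))
    · calc A*(s^2*(1 - exp (-(x/s)^2))) ≤ A * x^2 :=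
            mul_le_mul_of_nonneg_left (aS_le_sq hs x) hA0.le
        _ = max A 0 * x^2 := by rw [max_eq_left hA0.le]
  have hB : B*(x*exp (-(x/s)^2/2)) ≤ |B| * |x| := by
    calc B*(x*exp (-(x/s)^2/2)) ≤ |B*(x*exp (-(x/s)^2/2))| := le_abs_self _
      _ = |B| * |x*exp (-(x/s)^2/2)| := abs_mul _ _
      _ ≤ |B| * |x| := mul_le_mul_of_nonneg_left (bS_abs_le x) (abs_nonneg B)
  have hC : C ≤ |C| := le_abs_self C
  have hinner : A*(s^2*(1 - exp (-(x/s)^2))) + B*(x*exp (-(x/s)^2/2)) + C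
      ≤ max A 0 * x^2 + |B| * |x| + |C| := by linarith
  have hRHS : 0 ≤ max A 0 * x^2 + |B| * |x| + |C| := by
    have := mul_nonneg (le_max_right A 0) (sq_nonneg x)
    have := mul_nonneg (abs_nonneg B) (abs_nonneg x)
    have := abs_nonneg C
    linarith
  rcases le_or_gt 0 (A*(s^2*(1 - exp (-(x/s)^2))) + B*(x*exp (-(x/s)^2/2)) + C) with h0 | h0
  · calc c*(A*(s^2*(1 - exp (-(x/s)^2))) + B*(x*exp (-(x/s)^2/2)) + C)
        ≤ 1*(A*(s^2*(1 - exp (-(x/s)^2))) + B*(x*exp (-(x/s)^2/2)) + C) :=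
          mul_le_mul_of_nonneg_right hc1 h0
      _ ≤ max A 0 * x^2 + |B| * |x| + |C| := by rw [one_mul]; exact hinner
  · exact (mul_nonpos_of_nonneg_of_nonpos hc h0.le).trans hRHS

-- pointwise tendsto
lemma tendsto_aS (x : ℝ) :
    Tendsto (fun n : ℕ => ((n:ℝ)+1)^2*(1 - exp (-(x/((n:ℝ)+1))^2))) atTop (𝓝 (x^2)) := by
  have hsTop : Tendsto (fun n : ℕ => (n:ℝ)+1) atTop atTop :=
    tendsto_atTop_add_const_right _ 1 tendsto_natCast_atTop_atTop
  have hs : ∀ n : ℕ, (0:ℝ) < (n:ℝ)+1 := fun n => by positivity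
  have hxd : Tendsto (fun n : ℕ => x/((n:ℝ)+1)) atTop (𝓝 0) :=
    tendsto_const_nhds.div_atTop hsTop
  have hu : Tendsto (fun n : ℕ => (x/((n:ℝ)+1))^2) atTop (𝓝 0) := by
    have := hxd.mul hxd
    rw [mul_zero] at this
    refine this.congr fun n => ?_
    rw [sq]
  -- lower bound x^2/(1+(x/s)^2), upper x^2
  have hlow : Tendsto (fun n : ℕ => x^2/(1+(x/((n:ℝ)+1))^2)) atTop (𝓝 (x^2)) := by
    have hden : Tendsto (fun n : ℕ => 1+(x/((n:ℝ)+1))^2) atTop (𝓝 1) := by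
      have := (tendsto_const_nhds (x := (1:ℝ))).add hu
      simpa using this
    have := (tendsto_const_nhds (x := x^2)).div hden one_ne_zero
    rw [div_one] at this; exact this
  refine tendsto_of_tendsto_of_tendsto_of_le_of_le hlow tendsto_const_nhds
    (fun n => ?_) (fun n => aS_le_sq (hs n) x)
  -- x^2/(1+u) ≤ s^2*(1-exp (-u)) where u = (x/s)^2
  set s : ℝ := (n:ℝ)+1
  have hspos : 0 < s := hs n
  set u : ℝ := (x/s)^2 with hu_def
  have hu0 : 0 ≤ u := sq_nonneg _
  have h1u : (0:ℝ) < 1+u := by positivity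
  have hexp : exp (-u) ≤ 1/(1+u) := by
    rw [Real.exp_neg, inv_eq_one_div]
    refine one_div_le_one_div_of_le h1u ?_
    have := Real.add_one_le_exp u
    linarith
  have hx2 : x^2 = s^2*u := by rw [hu_def]; field_simp
  have hfrac : u/(1+u) ≤ 1 - exp (-u) := by
    have heq : u/(1+u) = 1 - 1/(1+u) := by field_simp; ring
    rw [heq]; linarith
  calc x^2/(1+u) = s^2*(u/(1+u)) := by rw [hx2]; ring
    _ ≤ s^2*(1-exp (-u)) := mul_le_mul_of_nonneg_left hfrac (sq_nonneg s)

lemma tendsto_bS (x : ℝ) :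
    Tendsto (fun n : ℕ => x*exp (-(x/((n:ℝ)+1))^2/2)) atTop (𝓝 x) := by
  have hsTop : Tendsto (fun n : ℕ => (n:ℝ)+1) atTop atTop :=
    tendsto_atTop_add_const_right _ 1 tendsto_natCast_atTop_atTop
  have hxd : Tendsto (fun n : ℕ => x/((n:ℝ)+1)) atTop (𝓝 0) :=
    tendsto_const_nhds.div_atTop hsTop
  have hu : Tendsto (fun n : ℕ => -(x/((n:ℝ)+1))^2/2) atTop (𝓝 0) := by
    have h2 := (hxd.mul hxd).neg.div_const 2
    simp only [mul_zero, neg_zero, zero_div] at h2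
    refine h2.congr fun n => ?_
    rw [sq]
  have hexp : Tendsto (fun n : ℕ => exp (-(x/((n:ℝ)+1))^2/2)) atTop (𝓝 1) := by
    have := (Real.continuous_exp.tendsto 0).comp hu
    rw [Real.exp_zero] at this; exact this
  have := tendsto_const_nhds (x := x) |>.mul hexp
  simpa using this

lemma tendsto_cN {K : ℝ} (hK : 0 ≤ K) :
    Tendsto (fun n : ℕ => ((n:ℝ)+1)/(((n:ℝ)+1)+K)) atTop (𝓝 1) := by
  have hsTop : Tendsto (fun n : ℕ => (n:ℝ)+1) atTop atTop :=
    tendsto_atTop_add_const_right _ 1 tendsto_natCast_atTop_atTop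
  have hdiv : Tendsto (fun n : ℕ => K/(((n:ℝ)+1)+K)) atTop (𝓝 0) :=
    tendsto_const_nhds.div_atTop (tendsto_atTop_add_const_right _ K hsTop)
  have h := (tendsto_const_nhds (x := (1:ℝ))).sub hdiv
  rw [sub_zero] at h
  refine h.congr fun n => ?_
  have hpos : (0:ℝ) < ((n:ℝ)+1)+K := by positivity
  field_simp
  ring

/-- For Gaussians `μ = N(b₁,σ₁²)`, `ν = N(b₂,σ₂²)` with `|1/σ₁² − 1/σ₂²| ≤ 1`:
`G_Γ(μ‖ν) = R(μ‖ν) = log(σ₂/σ₁) + (σ₁² + (b₁−b₂)²)/(2σ₂²) − 1/2`. -/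
theorem gDiv_gaussians_eq_relativeEntropy
    (b₁ b₂ σ₁ σ₂ : ℝ) (h1 : 0 < σ₁) (h2 : 0 < σ₂)
    (hclose : |1 / σ₁ ^ 2 - 1 / σ₂ ^ 2| ≤ 1) :
    gDivF gammaC1 (gaussianReal b₁ (Real.toNNReal (σ₁ ^ 2)))
        (gaussianReal b₂ (Real.toNNReal (σ₂ ^ 2)))
      = ((Real.log (σ₂ / σ₁) + (σ₁ ^ 2 + (b₁ - b₂) ^ 2) / (2 * σ₂ ^ 2) - 1 / 2 : ℝ) : EReal) := by
  have hv₁ : (σ₁^2).toNNReal ≠ 0 := toNNReal_sq_ne_zero h1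
  have hv₂ : (σ₂^2).toNNReal ≠ 0 := toNNReal_sq_ne_zero h2
  have hv₁pos : (0:ℝ) < (((σ₁^2).toNNReal : ℝ≥0) : ℝ) := by
    rw [coe_toNNReal_sq]; positivity
  set μ := gaussianReal b₁ (Real.toNNReal (σ₁ ^ 2)) with hμd
  set ν := gaussianReal b₂ (Real.toNNReal (σ₂ ^ 2)) with hνd
  set A : ℝ := 1/(2*σ₂^2) - 1/(2*σ₁^2) with hAd
  set B : ℝ := b₁/σ₁^2 - b₂/σ₂^2 with hBd
  set C : ℝ := Real.log (σ₂/σ₁) + b₂^2/(2*σ₂^2) - b₁^2/(2*σ₁^2) with hCd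
  set R : ℝ := Real.log (σ₂ / σ₁) + (σ₁ ^ 2 + (b₁ - b₂) ^ 2) / (2 * σ₂ ^ 2) - 1 / 2 with hRd
  -- |2A| ≤ 1
  have hAbs : 2*|A| ≤ 1 := by
    have h2A : 2*A = -(1/σ₁^2 - 1/σ₂^2) := by rw [hAd]; field_simp; ring
    have : 2*|A| = |2*A| := by rw [abs_mul]; simp
    rw [this, h2A, abs_neg]
    exact hclose
  -- the approximating sequence
  set K : ℝ := 11*|B| with hKd
  have hK : 0 ≤ K := by positivity
  have hsn : ∀ n : ℕ, (0:ℝ) < (n:ℝ)+1 := fun n => by positivity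
  have hcn0 : ∀ n : ℕ, (0:ℝ) ≤ ((n:ℝ)+1)/(((n:ℝ)+1)+K) :=
    fun n => div_nonneg (hsn n).le (by positivity)
  have hcn1 : ∀ n : ℕ, ((n:ℝ)+1)/(((n:ℝ)+1)+K) ≤ 1 := fun n => by
    rw [div_le_one (by positivity)]; linarith
  set gseq : ℕ → ℝ → ℝ := fun n x => (((n:ℝ)+1)/(((n:ℝ)+1)+K)) *
    (A*((((n:ℝ)+1))^2*(1 - exp (-(x/((n:ℝ)+1))^2))) + B*(x*exp (-(x/((n:ℝ)+1))^2/2)) + C)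
    with hgseqd
  have hmem : ∀ n : ℕ, gseq n ∈ gammaC1 := by
    intro n
    refine mem_gammaC1_seq (hsn n) _ A B C (hcn0 n) (hcn1 n) ?_
    have hstep : 2*|A| + 11*|B|/((n:ℝ)+1) ≤ 1 + K/((n:ℝ)+1) := by
      rw [hKd]
      have : (0:ℝ) < (n:ℝ)+1 := hsn n
      gcongr
    have heq1 : (((n:ℝ)+1)/(((n:ℝ)+1)+K)) * (1 + K/((n:ℝ)+1)) = 1 := by
      have h1' : ((n:ℝ)+1) ≠ 0 := (hsn n).ne'
      have h2' : ((n:ℝ)+1)+K ≠ 0 := by positivity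
      field_simp
    calc (((n:ℝ)+1)/(((n:ℝ)+1)+K)) * (2*|A| + 11*|B|/((n:ℝ)+1))
        ≤ (((n:ℝ)+1)/(((n:ℝ)+1)+K)) * (1 + K/((n:ℝ)+1)) :=
          mul_le_mul_of_nonneg_left hstep (hcn0 n)
      _ = 1 := heq1
  have hcont : ∀ n : ℕ, Continuous (gseq n) := by
    intro n
    have : Differentiable ℝ (gseq n) := fun x =>
      (hdG (hsn n) (((n:ℝ)+1)/(((n:ℝ)+1)+K)) A B C x).differentiableAt
    exact this.continuous
  -- pointwise limit
  have hlim : ∀ x : ℝ, Tendsto (fun n : ℕ => gseq n x) atTop (𝓝 (gstarF b₁ b₂ σ₁ σ₂ x)) := by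
    intro x
    have hinner : Tendsto (fun n : ℕ =>
        A*((((n:ℝ)+1))^2*(1 - exp (-(x/((n:ℝ)+1))^2))) + B*(x*exp (-(x/((n:ℝ)+1))^2/2)) + C)
        atTop (𝓝 (A*x^2 + B*x + C)) := by
      have hBx : Tendsto (fun n : ℕ => B*(x*exp (-(x/((n:ℝ)+1))^2/2))) atTop (𝓝 (B*x)) :=
        (tendsto_bS x).const_mul B
      have hAx : Tendsto (fun n : ℕ => A*((((n:ℝ)+1))^2*(1 - exp (-(x/((n:ℝ)+1))^2))))
          atTop (𝓝 (A*x^2)) := (tendsto_aS x).const_mul A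
      exact (hAx.add hBx).add tendsto_const_nhds
    have h := (tendsto_cN hK).mul hinner
    rw [one_mul] at h
    exact h
  -- integral convergence under μ
  have hIμ : Tendsto (fun n : ℕ => ∫ x, gseq n x ∂μ) atTop (𝓝 R) := by
    have hbint : Integrable (fun x : ℝ => |A| * x^2 + |B| * |x| + |C|) μ := by
      rw [hμd, gauss_transfer_integrable hv₁
        (by exact (((continuous_const.mul (continuous_pow 2)).add
          (continuous_const.mul continuous_abs)).add continuous_const).aestronglyMeasurable)]
      refine Integrable.mono' (integrable_poly2_mul_gaussianPDF b₁ hv₁pos (|A|+|B|) 0 (|B|+|C|))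
        ?_ (Eventually.of_forall fun x => ?_)
      · exact ((measurable_gaussianPDFReal _ _).mul
          ((((measurable_const.mul (measurable_id.pow_const 2)).add
            (measurable_const.mul measurable_abs)).add measurable_const))).aestronglyMeasurable
      · have hpdf := gaussianPDFReal_nonneg b₁ (σ₁^2).toNNReal x
        have hb : (0:ℝ) ≤ |A| * x^2 + |B| * |x| + |C| := by positivity
        rw [Real.norm_eq_abs, abs_of_nonneg (mul_nonneg hpdf hb)]
        have hxb : |A| * x^2 + |B| * |x| + |C| ≤ (|A|+|B|)*x^2 + 0*x + (|B|+|C|) := by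
          nlinarith [sq_abs x, sq_nonneg (|x| - 1), abs_nonneg x, abs_nonneg B]
        calc gaussianPDFReal b₁ (σ₁^2).toNNReal x * (|A| * x^2 + |B| * |x| + |C|)
            ≤ gaussianPDFReal b₁ (σ₁^2).toNNReal x * ((|A|+|B|)*x^2 + 0*x + (|B|+|C|)) :=
              mul_le_mul_of_nonneg_left hxb hpdf
          _ = ((|A|+|B|)*x^2 + 0*x + (|B|+|C|)) * gaussianPDFReal b₁ (σ₁^2).toNNReal x :=
              mul_comm _ _
    have hDC := tendsto_integral_of_dominated_convergence
      (F := fun n x => gseq n x) (f := gstarF b₁ b₂ σ₁ σ₂) (μ := μ)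
      (fun x => |A| * x^2 + |B| * |x| + |C|)
      (fun n => (hcont n).aestronglyMeasurable) hbint
      (fun n => Eventually.of_forall fun x => by
        rw [Real.norm_eq_abs]
        exact gseq_abs_le (hsn n) (hcn0 n) (hcn1 n) x)
      (Eventually.of_forall hlim)
    rw [hμd] at hDC ⊢
    rw [integral_gstar h1 h2] at hDC
    exact hDC
  -- integral convergence under ν
  have ha0 : (0:ℝ) < 1/(2*σ₂^2) - max A 0 := by
    rcases max_cases A 0 with ⟨hm, -⟩ | ⟨hm, -⟩
    · rw [hm, hAd]
      have : 1/(2*σ₂^2) - (1/(2*σ₂^2) - 1/(2*σ₁^2)) = 1/(2*σ₁^2) := by ring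
      rw [this]; positivity
    · rw [hm, sub_zero]; positivity
  have hIν : Tendsto (fun n : ℕ => ∫ x, exp (gseq n x) ∂ν) atTop (𝓝 1) := by
    have hDint : Integrable (fun x : ℝ => exp (max A 0 * x^2 + |B| * |x| + |C|)) ν := by
      rw [hνd, gauss_transfer_integrable hv₂
        (by exact (Real.continuous_exp.comp (((continuous_const.mul (continuous_pow 2)).add
          (continuous_const.mul continuous_abs)).add continuous_const)).aestronglyMeasurable)]
      have hQint := ((integrable_exp_neg_quadratic ha0 (b₂/σ₂^2 + |B|) (|C| - b₂^2/(2*σ₂^2))).add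
        (integrable_exp_neg_quadratic ha0 (b₂/σ₂^2 - |B|) (|C| - b₂^2/(2*σ₂^2)))).const_mul
        ((Real.sqrt (2*π*σ₂^2))⁻¹)
      refine Integrable.mono' hQint
        ((measurable_gaussianPDFReal _ _).mul ((measurable_exp.comp
          (((measurable_const.mul (measurable_id.pow_const 2)).add
            (measurable_const.mul measurable_abs)).add measurable_const)))).aestronglyMeasurable
        (Eventually.of_forall fun x => ?_)
      have hpdf := gaussianPDFReal_nonneg b₂ (σ₂^2).toNNReal x
      rw [Real.norm_eq_abs, abs_of_nonneg (mul_nonneg hpdf (exp_pos _).le)]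
      have hpdfeq : gaussianPDFReal b₂ (σ₂^2).toNNReal x
          = (Real.sqrt (2*π*σ₂^2))⁻¹ * exp (-(x - b₂)^2/(2*σ₂^2)) := by
        rw [gaussianPDFReal, coe_toNNReal_sq]
      rw [hpdfeq, mul_assoc, ← Real.exp_add]
      refine mul_le_mul_of_nonneg_left ?_ (by positivity)
      rcases abs_cases x with ⟨hx, -⟩ | ⟨hx, -⟩
      · have hSeq : -(x - b₂)^2/(2*σ₂^2) + (max A 0 * x^2 + |B| * |x| + |C|)
            = -(1/(2*σ₂^2) - max A 0)*x^2 + (b₂/σ₂^2 + |B|)*x + (|C| - b₂^2/(2*σ₂^2)) := by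
          rw [hx]; field_simp; ring
        rw [hSeq]
        exact le_add_of_nonneg_right (exp_pos _).le
      · have hSeq : -(x - b₂)^2/(2*σ₂^2) + (max A 0 * x^2 + |B| * |x| + |C|)
            = -(1/(2*σ₂^2) - max A 0)*x^2 + (b₂/σ₂^2 - |B|)*x + (|C| - b₂^2/(2*σ₂^2)) := by
          rw [hx]; field_simp; ring
        rw [hSeq]
        exact le_add_of_nonneg_left (exp_pos _).le
    have hint1 : ∫ x, exp (gstarF b₁ b₂ σ₁ σ₂ x) ∂ν = 1 := by
      rw [hνd, gauss_transfer_integral hv₂]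
      have : (fun x => gaussianPDFReal b₂ (σ₂^2).toNNReal x * exp (gstarF b₁ b₂ σ₁ σ₂ x))
          = gaussianPDFReal b₁ (σ₁^2).toNNReal := by
        funext x
        rw [mul_comm]
        exact key_pq h1 h2 x
      rw [this]
      exact integral_gaussianPDFReal_eq_one b₁ hv₁
    have hDC := tendsto_integral_of_dominated_convergence
      (F := fun n x => exp (gseq n x)) (f := fun x => exp (gstarF b₁ b₂ σ₁ σ₂ x)) (μ := ν)
      (fun x => exp (max A 0 * x^2 + |B| * |x| + |C|))
      (fun n => (Real.continuous_exp.comp (hcont n)).aestronglyMeasurable) hDint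
      (fun n => Eventually.of_forall fun x => by
        rw [Real.norm_eq_abs, abs_of_pos (exp_pos _)]
        exact Real.exp_le_exp.mpr (gseq_le_upper (hsn n) (hcn0 n) (hcn1 n) x))
      (Eventually.of_forall fun x => (Real.continuous_exp.tendsto _).comp (hlim x))
    rw [hint1] at hDC
    exact hDC
  have hlog : Tendsto (fun n : ℕ => Real.log (∫ x, exp (gseq n x) ∂ν)) atTop (𝓝 0) := by
    have := ((Real.continuousAt_log one_ne_zero).tendsto).comp hIν
    rw [Real.log_one] at this; exact this
  have hvn : Tendsto (fun n : ℕ => (∫ x, gseq n x ∂μ) - Real.log (∫ x, exp (gseq n x) ∂ν))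
      atTop (𝓝 R) := by
    have := hIμ.sub hlog
    rw [sub_zero] at this
    exact this
  -- final assembly
  apply le_antisymm
  · rw [gDivF]
    refine iSup₂_le fun g hg => ?_
    exact EReal.coe_le_coe_iff.mpr (upper_bound h1 h2 g hg)
  · have hle : ∀ n : ℕ, (((∫ x, gseq n x ∂μ) - Real.log (∫ x, exp (gseq n x) ∂ν) : ℝ) : EReal)
        ≤ gDivF gammaC1 μ ν := fun n => by
      rw [gDivF]
      exact le_iSup₂_of_le (gseq n) (hmem n) (le_refl _)
    have hconv : Tendsto (fun n : ℕ =>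
        (((∫ x, gseq n x ∂μ) - Real.log (∫ x, exp (gseq n x) ∂ν) : ℝ) : EReal)) atTop
        (𝓝 ((R : ℝ) : EReal)) := (continuous_coe_real_ereal.tendsto _).comp hvn
    exact le_of_tendsto hconv (Eventually.of_forall hle)
end
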